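/- arXiv:math/0506363 — 5 statements merged into one kernel-verified Lean document; each statement's English description precedes it below -/
import Mathlib

section
/- Let (X,d,μ) be a metric measure space satisfying (DV)_loc and fix α > 0. Then there exists a constant c > 0 such that for every countable family (B(x_i,α))_{i ∈ I} of pairwise disjoint open balls of X, there is a subset J ⊆ I such that the balls (B(x_j,2α))_{j ∈ J} are still pairwise disjoint and Σ_{j ∈ J} μ(B(x_j,2α)) ≥ c Σ_{i ∈ I} μ(B(x_i,α)). -/
open Metric MeasureTheory Set ENNReal NNReal

noncomputable section

/-- Property `(DV)_loc`: doubling at fixed radius. -/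
def DVloc {X : Type*} [MetricSpace X] [MeasurableSpace X] (μ : Measure X) : Prop :=
  ∀ r > (0 : ℝ), ∃ C : ℝ≥0, 0 < C ∧
    ∀ x : X, μ (Metric.ball x (2 * r)) ≤ (C : ℝ≥0∞) * μ (Metric.ball x r)

theorem disjoint_balls_selection
    {X : Type*} [MetricSpace X] [MeasurableSpace X] [BorelSpace X]
    (μ : Measure X) [SigmaFinite μ] (hDV : DVloc μ) (α : ℝ) (hα : 0 < α) :
    ∃ c : ℝ≥0, 0 < c ∧
      ∀ (I : Type) (_ : Countable I) (x : I → X),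
        (Pairwise fun i j => Disjoint (Metric.ball (x i) α) (Metric.ball (x j) α)) →
        ∃ J : Set I,
          (∀ i ∈ J, ∀ j ∈ J, i ≠ j →
            Disjoint (Metric.ball (x i) (2 * α)) (Metric.ball (x j) (2 * α))) ∧
          (c : ℝ≥0∞) * ∑' i : I, μ (Metric.ball (x i) α) ≤
            ∑' j : J, μ (Metric.ball (x j) (2 * α)) := by
  obtain ⟨C₂, hC₂pos, hC₂⟩ := hDV (2 * α) (by linarith)
  obtain ⟨C₄, hC₄pos, hC₄⟩ := hDV (4 * α) (by linarith)
  set K : ℝ≥0 := C₄ * C₂ with hK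
  have hKpos : 0 < K := mul_pos hC₄pos hC₂pos
  refine ⟨K⁻¹, inv_pos.mpr hKpos, ?_⟩
  intro I _ x hdisj
  -- doubling twice: μ(B(x,8α)) ≤ K μ(B(x,2α))
  have hdouble : ∀ y : X, μ (Metric.ball y (8 * α)) ≤ (K : ℝ≥0∞) * μ (Metric.ball y (2 * α)) := by
    intro y
    have h1 : μ (Metric.ball y (8 * α)) ≤ (C₄ : ℝ≥0∞) * μ (Metric.ball y (4 * α)) := by
      have := hC₄ y; rw [show (2 : ℝ) * (4 * α) = 8 * α by ring] at this; exact this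
    have h2 : μ (Metric.ball y (4 * α)) ≤ (C₂ : ℝ≥0∞) * μ (Metric.ball y (2 * α)) := by
      have := hC₂ y; rw [show (2 : ℝ) * (2 * α) = 4 * α by ring] at this; exact this
    calc μ (Metric.ball y (8 * α)) ≤ (C₄ : ℝ≥0∞) * μ (Metric.ball y (4 * α)) := h1
      _ ≤ (C₄ : ℝ≥0∞) * ((C₂ : ℝ≥0∞) * μ (Metric.ball y (2 * α))) := by gcongr
      _ = (K : ℝ≥0∞) * μ (Metric.ball y (2 * α)) := by
          rw [hK, ENNReal.coe_mul, mul_assoc]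
  -- maximal set with pairwise disjoint 2α-balls
  set S : Set (Set I) := {J | ∀ i ∈ J, ∀ j ∈ J, i ≠ j →
      Disjoint (Metric.ball (x i) (2 * α)) (Metric.ball (x j) (2 * α))} with hS
  obtain ⟨J, hJmax⟩ := zorn_subset S (by
    intro c hcS hchain
    refine ⟨⋃₀ c, ?_, fun s hs => subset_sUnion_of_mem hs⟩
    intro i hi j hj hij
    obtain ⟨s, hs, his⟩ := hi
    obtain ⟨t, ht, hjt⟩ := hj
    rcases hchain.total hs ht with h | h
    · exact hcS ht i (h his) j hjt hij
    · exact hcS hs i his j (h hjt) hij)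
  have hJS : J ∈ S := hJmax.prop
  refine ⟨J, fun i hi j hj hij => hJS i hi j hj hij, ?_⟩
  -- every i has a close point in J
  have hclose : ∀ i : I, ∃ j ∈ J, dist (x i) (x j) < 4 * α := by
    intro i
    by_cases hiJ : i ∈ J
    · exact ⟨i, hiJ, by rw [dist_self]; linarith⟩
    · by_contra hcon
      push_neg at hcon
      have hins : insert i J ∈ S := by
        intro a ha b hb hab
        rcases ha with rfl | ha
        · rcases hb with rfl | hb
          · exact absurd rfl hab
          · refine Metric.ball_disjoint_ball ?_
            have := hcon b hb; linarith
        · rcases hb with rfl | hb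
          · refine (Metric.ball_disjoint_ball ?_).symm
            have h1 := hcon a ha
            have h2 : dist (x b) (x a) = dist (x a) (x b) := dist_comm _ _
            linarith
          · exact hJS a ha b hb hab
      have := hJmax.eq_of_subset hins (subset_insert i J)
      exact hiJ (this ▸ mem_insert i J)
  -- choice function
  choose g hgJ hgdist using hclose
  let f : I → J := fun i => ⟨g i, hgJ i⟩
  have key : ∀ j : J, ∑' i : f ⁻¹' {j}, μ (Metric.ball (x i) α) ≤
      (K : ℝ≥0∞) * μ (Metric.ball (x (j : I)) (2 * α)) := by
    intro j
    have hmeas : ∀ i : f ⁻¹' {j}, MeasurableSet (Metric.ball (x (i : I)) α) :=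
      fun i => measurableSet_ball
    have hpd : Pairwise fun (i₁ i₂ : f ⁻¹' {j}) =>
        (Function.onFun Disjoint (fun i : f ⁻¹' {j} => Metric.ball (x (i : I)) α)) i₁ i₂ := by
      intro i₁ i₂ h12
      exact hdisj (fun h => h12 (Subtype.ext h))
    have hsum : ∑' i : f ⁻¹' {j}, μ (Metric.ball (x (i : I)) α) =
        μ (⋃ i : f ⁻¹' {j}, Metric.ball (x (i : I)) α) :=
      (measure_iUnion hpd fun i => measurableSet_ball).symm
    rw [hsum]
    have hsub : (⋃ i : f ⁻¹' {j}, Metric.ball (x (i : I)) α) ⊆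
        Metric.ball (x (j : I)) (8 * α) := by
      rintro y ⟨s, ⟨i, rfl⟩, hy⟩
      have hij : g i = (j : I) := congrArg Subtype.val i.prop
      have hdi : dist (x (i : I)) (x (j : I)) < 4 * α := hij ▸ hgdist (i : I)
      have : dist y (x (i : I)) < α := hy
      have := dist_triangle y (x (i : I)) (x (j : I))
      simp only [Metric.mem_ball]
      linarith
    calc μ (⋃ i : f ⁻¹' {j}, Metric.ball (x (i : I)) α)
        ≤ μ (Metric.ball (x (j : I)) (8 * α)) := measure_mono hsub
      _ ≤ (K : ℝ≥0∞) * μ (Metric.ball (x (j : I)) (2 * α)) := hdouble _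
  have total : ∑' i : I, μ (Metric.ball (x i) α) ≤
      (K : ℝ≥0∞) * ∑' j : J, μ (Metric.ball (x (j : I)) (2 * α)) := by
    rw [← ENNReal.tsum_fiberwise (fun i => μ (Metric.ball (x i) α)) f,
      ← ENNReal.tsum_mul_left]
    exact ENNReal.tsum_le_tsum key
  calc ((K⁻¹ : ℝ≥0) : ℝ≥0∞) * ∑' i : I, μ (Metric.ball (x i) α)
      ≤ ((K⁻¹ : ℝ≥0) : ℝ≥0∞) * ((K : ℝ≥0∞) * ∑' j : J, μ (Metric.ball (x (j : I)) (2 * α))) := by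
        gcongr
    _ = ∑' j : J, μ (Metric.ball (x (j : I)) (2 * α)) := by
        rw [← mul_assoc, ← ENNReal.coe_mul, inv_mul_cancel₀ hKpos.ne', ENNReal.coe_one, one_mul]
end
end

section
/- Let (X,d,μ) and (X',d',μ') be metric measure spaces satisfying (DV)_loc, with X uniformly b-connected and X' uniformly b'-connected. If there exists a large-scale equivalence f : X → X', then the profiles are equivalent: I_{2b} ≈ I'_{2b'}, i.e. there exist constants C₁, C₂, C₃, C₄ > 0 such that C₁ I'_{2b'}(C₂ t) ≤ I_{2b}(t) ≤ C₃ I'_{2b'}(C₄ t) for all t > 0. -/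
open Metric MeasureTheory Set ENNReal NNReal

noncomputable section

/-- The closed `h`-neighborhood `A_h = {x : d(x,A) ≤ h}` of a set `A`. -/
def nbhd {X : Type*} [MetricSpace X] (A : Set X) (h : ℝ) : Set X :=
  {x | Metric.infDist x A ≤ h}

/-- The `h`-boundary `∂_h A = A_h ∩ (Aᶜ)_h` of a set `A`. -/
def hBdry {X : Type*} [MetricSpace X] (A : Set X) (h : ℝ) : Set X := nbhd A h ∩ nbhd Aᶜ h

/-- There is a `b`-chain from `x` to `y` entirely contained in `S`. -/
def ChainIn {X : Type*} [MetricSpace X] (b : ℝ) (S : Set X) (x y : X) : Prop :=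
  ∃ (n : ℕ) (c : ℕ → X), c 0 = x ∧ c n = y ∧ (∀ i < n, dist (c i) (c (i + 1)) ≤ b) ∧
    ∀ i ≤ n, c i ∈ S

/-- `X` is uniformly `b`-connected. -/
def UnifConn (X : Type*) [MetricSpace X] (b : ℝ) : Prop :=
  ∀ E₁ > (0 : ℝ), ∃ E₂ ≥ E₁, ∀ x y : X, dist x y ≤ E₁ → ChainIn b (Metric.ball x E₂) x y

/-- The `h`-profile `I_h(t) = inf {μ(∂_h A) : A measurable, μ A < ∞, μ A ≥ t}`. -/
def profile {X : Type*} [MetricSpace X] [MeasurableSpace X]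
    (μ : Measure X) (h : ℝ) (t : ℝ≥0∞) : ℝ≥0∞ :=
  ⨅ (A : Set X) (_ : MeasurableSet A) (_ : μ A ≠ ∞) (_ : t ≤ μ A), μ (hBdry A h)

/-- `f : X → X'` is a large-scale equivalence with constants `C₁, C₂, C₃`. -/
def LargeScaleEquiv {X X' : Type*} [MetricSpace X] [MetricSpace X']
    [MeasurableSpace X] [MeasurableSpace X'] (μ : Measure X) (μ' : Measure X')
    (f : X → X') (C₁ C₂ : ℝ) (C₃ : ℝ≥0) : Prop :=
  0 < C₁ ∧ 1 ≤ C₂ ∧ 1 ≤ C₃ ∧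
  (∀ y : X', ∃ x : X, dist y (f x) ≤ C₁) ∧
  (∀ x y : X, C₂⁻¹ * dist x y - C₂ ≤ dist (f x) (f y) ∧
    dist (f x) (f y) ≤ C₂ * dist x y + C₂) ∧
  (∀ x : X, (C₃ : ℝ≥0∞)⁻¹ * μ (Metric.ball x 1) ≤ μ' (Metric.ball (f x) 1) ∧
    μ' (Metric.ball (f x) 1) ≤ (C₃ : ℝ≥0∞) * μ (Metric.ball x 1))

/-! ### Helpers -/

section Helpers
variable {X : Type*} [MetricSpace X]

lemma enn_cancel₁ {K : ℝ≥0} (hK : K ≠ 0) (a : ℝ≥0∞) :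
    (K : ℝ≥0∞) * ((K : ℝ≥0∞)⁻¹ * a) = a := by
  rw [← mul_assoc, ENNReal.mul_inv_cancel (by exact_mod_cast hK) ENNReal.coe_ne_top, one_mul]

lemma enn_cancel₂ {K : ℝ≥0} (hK : K ≠ 0) (a : ℝ≥0∞) :
    (K : ℝ≥0∞)⁻¹ * ((K : ℝ≥0∞) * a) = a := by
  rw [← mul_assoc, ENNReal.inv_mul_cancel (by exact_mod_cast hK) ENNReal.coe_ne_top, one_mul]

lemma le_mul_of_inv_mul_le {K : ℝ≥0} (hK : K ≠ 0) {a b : ℝ≥0∞}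
    (h : (K : ℝ≥0∞)⁻¹ * a ≤ b) : a ≤ K * b := by
  calc a = (K : ℝ≥0∞) * ((K : ℝ≥0∞)⁻¹ * a) := (enn_cancel₁ hK a).symm
    _ ≤ K * b := mul_le_mul_right h _

lemma inv_mul_le_of_le_mul' {K K' : ℝ≥0} (hK' : K' ≠ 0) (hKK : K ≤ K') {a b : ℝ≥0∞}
    (h : a ≤ K * b) : (K' : ℝ≥0∞)⁻¹ * a ≤ b := by
  calc (K' : ℝ≥0∞)⁻¹ * a ≤ (K' : ℝ≥0∞)⁻¹ * ((K' : ℝ≥0∞) * b) := by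
        refine mul_le_mul_right (h.trans ?_) _
        exact mul_le_mul_left (by exact_mod_cast hKK) _
    _ = b := enn_cancel₂ hK' b

lemma enn_cancel_le {K : ℝ≥0} (hK : K ≠ 0) {a b : ℝ≥0∞}
    (h : (K : ℝ≥0∞) * a ≤ (K : ℝ≥0∞) * b) : a ≤ b :=
  (ENNReal.mul_le_mul_iff_right (by exact_mod_cast hK) ENNReal.coe_ne_top).mp h

lemma qd_upper {C₂ d e : ℝ} (h2 : 0 < C₂) (h : C₂⁻¹ * d - C₂ ≤ e) : d ≤ C₂ * (e + C₂) := by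
  have h' : C₂⁻¹ * d ≤ e + C₂ := by linarith
  calc d = C₂ * (C₂⁻¹ * d) := by field_simp
    _ ≤ C₂ * (e + C₂) := mul_le_mul_of_nonneg_left h' h2.le

lemma qd_lower {C d e : ℝ} (hC : 0 < C) (h : d ≤ C * (e + C)) : C⁻¹ * d - C ≤ e := by
  have : C⁻¹ * d ≤ C⁻¹ * (C * (e + C)) := mul_le_mul_of_nonneg_left h (by positivity)
  rw [← mul_assoc, inv_mul_cancel₀ hC.ne', one_mul] at this
  linarith

/-! ### nbhd and hBdry -/

lemma nbhd_mem {A : Set X} {h : ℝ} {x : X} : x ∈ nbhd A h ↔ infDist x A ≤ h := Iff.rfl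

lemma isClosed_nbhd (A : Set X) (h : ℝ) : IsClosed (nbhd A h) :=
  isClosed_le (continuous_infDist_pt A) continuous_const

lemma measurableSet_nbhd [MeasurableSpace X] [BorelSpace X] (A : Set X) (h : ℝ) :
    MeasurableSet (nbhd A h) := (isClosed_nbhd A h).measurableSet

lemma measurableSet_hBdry [MeasurableSpace X] [BorelSpace X] (A : Set X) (h : ℝ) :
    MeasurableSet (hBdry A h) :=
  (measurableSet_nbhd A h).inter (measurableSet_nbhd Aᶜ h)

lemma subset_nbhd {A : Set X} {h : ℝ} (hh : 0 ≤ h) : A ⊆ nbhd A h := fun x hx => by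
  simp [nbhd_mem, infDist_zero_of_mem hx, hh]

lemma nbhd_subset_union {A : Set X} {h : ℝ} : nbhd A h ⊆ A ∪ hBdry A h := by
  intro y hy
  by_cases hyA : y ∈ A
  · exact Or.inl hyA
  · refine Or.inr ⟨hy, ?_⟩
    have h0 : (0:ℝ) ≤ h := le_trans infDist_nonneg hy
    simp [nbhd_mem, infDist_zero_of_mem (show y ∈ Aᶜ from hyA), h0]

/-! doubling iteration -/

variable [MeasurableSpace X] (μ : Measure X)

lemma doubling_iter (hDV : DVloc μ) {r : ℝ} (hr : 0 < r) (R : ℝ) :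
    ∃ Λ : ℝ≥0, 0 < Λ ∧ ∀ x : X, μ (ball x R) ≤ (Λ : ℝ≥0∞) * μ (ball x r) := by
  have key : ∀ k : ℕ, ∃ Λ : ℝ≥0, 0 < Λ ∧
      ∀ x : X, μ (ball x (2 ^ k * r)) ≤ (Λ : ℝ≥0∞) * μ (ball x r) := by
    intro k
    induction k with
    | zero => exact ⟨1, one_pos, fun x => by simp⟩
    | succ k ih =>
      obtain ⟨Λ, hΛ0, hΛ⟩ := ih
      obtain ⟨C, hC0, hC⟩ := hDV (2 ^ k * r) (by positivity)
      refine ⟨C * Λ, mul_pos hC0 hΛ0, fun x => ?_⟩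
      have h1 : (2 : ℝ) ^ (k + 1) * r = 2 * (2 ^ k * r) := by ring
      rw [h1]
      calc μ (ball x (2 * (2 ^ k * r))) ≤ (C : ℝ≥0∞) * μ (ball x (2 ^ k * r)) := hC x
        _ ≤ (C : ℝ≥0∞) * ((Λ : ℝ≥0∞) * μ (ball x r)) := mul_le_mul_right (hΛ x) _
        _ = ((C * Λ : ℝ≥0) : ℝ≥0∞) * μ (ball x r) := by
            rw [ENNReal.coe_mul, mul_assoc]
  obtain ⟨k, hk⟩ := pow_unbounded_of_one_lt (R / r) (one_lt_two (α := ℝ))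
  obtain ⟨Λ, hΛ0, hΛ⟩ := key k
  refine ⟨Λ, hΛ0, fun x => ?_⟩
  have hRk : R ≤ 2 ^ k * r := by
    have := (div_lt_iff₀ hr).mp hk
    linarith
  exact le_trans (measure_mono (ball_subset_ball hRk)) (hΛ x)

lemma all_null (hDV : DVloc μ) {x₀ : X} {r₀ : ℝ} (hr₀ : 0 < r₀)
    (h0 : μ (ball x₀ r₀) = 0) (s : Set X) : μ s = 0 := by
  have hball : ∀ R : ℝ, μ (ball x₀ R) = 0 := by
    intro R
    obtain ⟨Λ, _, hΛ⟩ := doubling_iter μ hDV hr₀ R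
    have := hΛ x₀
    rw [h0, mul_zero] at this
    exact le_antisymm this zero_le
  have huniv : (⋃ n : ℕ, ball x₀ (n : ℝ)) = univ := by
    ext y
    simp only [mem_iUnion, mem_ball, mem_univ, iff_true]
    exact exists_nat_gt (dist y x₀)
  have : μ (univ : Set X) = 0 := by
    rw [← huniv]
    refine le_antisymm (le_trans (measure_iUnion_le _) ?_) zero_le
    simp [hball]
  exact le_antisymm ((measure_mono (subset_univ s)).trans this.le) zero_le

lemma all_inf (hDV : DVloc μ) {x₀ : X} {r₀ : ℝ} (hr₀ : 0 < r₀)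
    (hinf : μ (ball x₀ r₀) = ∞) : ∀ (x : X) (r : ℝ), 0 < r → μ (ball x r) = ∞ := by
  intro x r hr
  obtain ⟨Λ, _, hΛ⟩ := doubling_iter μ hDV hr (dist x₀ x + r₀)
  have hsub : ball x₀ r₀ ⊆ ball x (dist x₀ x + r₀) := fun u hu => by
    rw [mem_ball] at hu ⊢
    calc dist u x ≤ dist u x₀ + dist x₀ x := dist_triangle _ _ _
      _ < r₀ + dist x₀ x := by linarith
      _ = dist x₀ x + r₀ := by ring
  have h1 : (∞ : ℝ≥0∞) ≤ (Λ : ℝ≥0∞) * μ (ball x r) := by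
    calc (∞ : ℝ≥0∞) = μ (ball x₀ r₀) := hinf.symm
      _ ≤ μ (ball x (dist x₀ x + r₀)) := measure_mono hsub
      _ ≤ (Λ : ℝ≥0∞) * μ (ball x r) := hΛ x
  by_contra hne
  exact (ENNReal.mul_ne_top ENNReal.coe_ne_top hne) (top_le_iff.mp h1)

end Helpers
/-! ### Maximal separated sets and the covering workhorse -/

section Workhorse

lemma max_sep {Y : Type*} [MetricSpace Y] (P : Set Y) (D : ℝ) (hD : 0 < D) :
    ∃ M ⊆ P, (M.Pairwise fun a b => D < dist a b) ∧ ∀ q ∈ P, ∃ m ∈ M, dist q m ≤ D := by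
  set 𝒮 : Set (Set Y) := {M | M ⊆ P ∧ M.Pairwise fun a b => D < dist a b} with h𝒮
  have hzorn : ∀ c ⊆ 𝒮, IsChain (fun x1 x2 => x1 ⊆ x2) c → ∃ ub ∈ 𝒮, ∀ s ∈ c, s ⊆ ub := by
    intro c hc hchain
    refine ⟨⋃₀ c, ⟨?_, ?_⟩, fun s hs => subset_sUnion_of_mem hs⟩
    · exact sUnion_subset fun s hs => (hc hs).1
    · intro a ha b hb hab
      obtain ⟨s, hs, has⟩ := ha
      obtain ⟨u, hu, hbu⟩ := hb
      rcases hchain.total hs hu with h | h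
      · exact (hc hu).2 (h has) hbu hab
      · exact (hc hs).2 has (h hbu) hab
  obtain ⟨M, hM⟩ := zorn_subset 𝒮 hzorn
  obtain ⟨hMP, hMsep⟩ := hM.prop
  · 
    refine ⟨M, hMP, hMsep, fun q hq => ?_⟩
    by_contra hno
    push_neg at hno
    have hqM : q ∉ M := fun hqM => by
      have := hno q hqM
      simp at this
      exact absurd this.le (not_le.mpr hD)
    have hins : insert q M ∈ 𝒮 := by
      constructor
      · exact insert_subset hq hMP
      · refine hMsep.insert fun m hm hne => ?_
        have h1 : D < dist q m := hno m hm
        exact ⟨h1, by rwa [dist_comm]⟩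
    have := hM.eq_of_ge (y := insert q M) hins (subset_insert _ _)
    have hq' : q ∈ insert q M := mem_insert q M
    rw [this] at hq'
    exact hqM hq'

lemma workhorse {Y Z : Type*} [MetricSpace Y] [MeasurableSpace Y] [BorelSpace Y]
    [MetricSpace Z] [MeasurableSpace Z] [BorelSpace Z]
    (ν : Measure Y) [SigmaFinite ν] (ν' : Measure Z)
    (hpos : ∀ (y : Y) (r : ℝ), 0 < r → ν (ball y r) ≠ 0)
    (T : Set Y) (G : Set Z) (hG : MeasurableSet G)
    (p : Y → Z) {D δ : ℝ} (hD : 0 < D) (hδ : 0 < δ) (c : ℝ≥0)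
    (hball : ∀ y ∈ T, ball (p y) δ ⊆ G)
    (hdisj : ∀ y ∈ T, ∀ y' ∈ T, D < dist y y' → Disjoint (ball (p y) δ) (ball (p y') δ))
    (hcmp : ∀ y ∈ T, ν (ball y (D + 1)) ≤ (c : ℝ≥0∞) * ν' (ball (p y) δ)) :
    ν T ≤ (c : ℝ≥0∞) * ν' G := by
  obtain ⟨M, hMT, hsep, hcov⟩ := max_sep T D hD
  have hMcount : M.Countable := by
    have hdisj2 : Pairwise (Function.onFun Disjoint fun m : M => ball (m : Y) (D / 2)) := by
      intro m m' hne
      have hnn : (m : Y) ≠ (m' : Y) := Subtype.coe_injective.ne hne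
      have := hsep m.2 m'.2 hnn
      exact ball_disjoint_ball (by linarith)
    have hcnt := Measure.countable_meas_pos_of_disjoint_iUnion (μ := ν)
      (As := fun m : M => ball (m : Y) (D / 2)) (fun m => measurableSet_ball) hdisj2
    have huniv : {i : M | 0 < ν (ball (i : Y) (D / 2))} = univ := by
      ext i
      simp only [mem_setOf_eq, mem_univ, iff_true]
      exact pos_iff_ne_zero.mpr (hpos _ _ (by linarith))
    rw [huniv] at hcnt
    exact Set.countable_coe_iff.mp (countable_univ_iff.mp hcnt)
  have hMsub : T ⊆ ⋃ m ∈ M, ball m (D + 1) := by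
    intro q hq
    obtain ⟨m, hm, hqm⟩ := hcov q hq
    exact mem_biUnion hm (mem_ball.mpr (by linarith))
  have hPD : M.PairwiseDisjoint fun m => ball (p m) δ := by
    intro m hm m' hm' hne
    exact hdisj m (hMT hm) m' (hMT hm') (hsep hm hm' hne)
  calc ν T ≤ ν (⋃ m ∈ M, ball m (D + 1)) := measure_mono hMsub
    _ ≤ ∑' m : M, ν (ball (m : Y) (D + 1)) := measure_biUnion_le ν hMcount _
    _ ≤ ∑' m : M, (c : ℝ≥0∞) * ν' (ball (p (m : Y)) δ) :=
        ENNReal.tsum_le_tsum fun m => hcmp m (hMT m.2)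
    _ = (c : ℝ≥0∞) * ∑' m : M, ν' (ball (p (m : Y)) δ) := ENNReal.tsum_mul_left
    _ = (c : ℝ≥0∞) * ν' (⋃ m ∈ M, ball (p m) δ) := by
        rw [measure_biUnion hMcount hPD fun m _ => measurableSet_ball]
    _ ≤ (c : ℝ≥0∞) * ν' G :=
        mul_le_mul_right (measure_mono (iUnion₂_subset fun m hm => hball m (hMT hm))) _

end Workhorse

/-! ### Chains and boundary points -/

section Chains
variable {X' : Type*} [MetricSpace X']

lemma chain_cross {A : Set X'} : ∀ (n : ℕ) (c : ℕ → X'), c 0 ∈ A → c n ∉ A →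
    ∃ i < n, c i ∈ A ∧ c (i + 1) ∉ A := by
  intro n
  induction n with
  | zero => exact fun c h0 hn => absurd h0 hn
  | succ n ih =>
    intro c h0 hn
    by_cases h : c n ∈ A
    · exact ⟨n, n.lt_succ_self, h, hn⟩
    · obtain ⟨i, hi, h1, h2⟩ := ih c h0 h
      exact ⟨i, hi.trans n.lt_succ_self, h1, h2⟩

lemma exit_pt {b' : ℝ} (hconn : UnifConn X' b') {h : ℝ} (hh : 0 < h) :
    ∃ E ≥ h + 1, ∀ (A : Set X') (y : X'), y ∈ A → infDist y Aᶜ ≤ h → Aᶜ.Nonempty →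
      ∃ p, dist p y ≤ E ∧ p ∈ A ∧ infDist p Aᶜ ≤ b' := by
  obtain ⟨E, hE1, hE⟩ := hconn (h + 1) (by linarith)
  refine ⟨E, hE1, fun A y hy hyd hne => ?_⟩
  obtain ⟨w, hwmem, hwd⟩ := (infDist_lt_iff hne).mp (lt_of_le_of_lt hyd (lt_add_one h))
  obtain ⟨n, c, hc0, hcn, hstep, hmem⟩ := hE y w hwd.le
  have hcnA : c n ∉ A := by rw [hcn]; exact hwmem
  obtain ⟨i, hi, h1, h2⟩ := chain_cross n c (hc0 ▸ hy) hcnA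
  refine ⟨c i, ?_, h1, le_trans (infDist_le_dist_of_mem h2) (hstep i hi)⟩
  exact (mem_ball.mp (hmem i hi.le)).le

lemma bdry_pt {b' : ℝ} (hconn : UnifConn X' b') (hb' : 0 < b') {h : ℝ} (hh : 0 < h) :
    ∃ E ≥ h + 1, ∀ (A : Set X') (y : X'), A.Nonempty → Aᶜ.Nonempty →
      infDist y A ≤ h → infDist y Aᶜ ≤ h →
      ∃ p, dist p y ≤ E ∧ infDist p A ≤ b' ∧ infDist p Aᶜ ≤ b' := by
  obtain ⟨E, hE1, hE⟩ := exit_pt hconn hh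
  refine ⟨E, hE1, fun A y hA hAc h1 h2 => ?_⟩
  by_cases hy : y ∈ A
  · obtain ⟨p, hp1, hp2, hp3⟩ := hE A y hy h2 hAc
    exact ⟨p, hp1, by simp [infDist_zero_of_mem hp2, hb'.le], hp3⟩
  · have h1' : infDist y Aᶜᶜ ≤ h := by rwa [compl_compl]
    have hA' : Aᶜᶜ.Nonempty := by rwa [compl_compl]
    obtain ⟨p, hp1, hp2, hp3⟩ := hE Aᶜ y hy h1' hA'
    rw [compl_compl] at hp3
    exact ⟨p, hp1, hp3, by simp [infDist_zero_of_mem hp2, hb'.le]⟩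

end Chains
/-! ### Comparison of boundaries at different scales (L2) -/

section L2
variable {X' : Type*} [MetricSpace X'] [MeasurableSpace X'] [BorelSpace X']

lemma hBdry_of_empty [Nonempty X'] {h : ℝ} (hh : 0 < h) :
    hBdry (∅ : Set X') h = univ := by
  ext y
  simp only [hBdry, nbhd, mem_inter_iff, mem_setOf_eq, mem_univ, iff_true, compl_empty]
  exact ⟨by simp [infDist_empty, hh.le], by simp [infDist_zero_of_mem (mem_univ y), hh.le]⟩

lemma hBdry_of_univ [Nonempty X'] {h : ℝ} (hh : 0 < h) :
    hBdry (univ : Set X') h = univ := by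
  ext y
  simp only [hBdry, nbhd, mem_inter_iff, mem_setOf_eq, mem_univ, iff_true, compl_univ]
  exact ⟨by simp [infDist_zero_of_mem (mem_univ y), hh.le], by simp [infDist_empty, hh.le]⟩

lemma bdry_compare [Nonempty X'] (μ' : Measure X') [SigmaFinite μ'] {b' : ℝ}
    (hb' : 0 < b') (hDV' : DVloc μ') (hconn' : UnifConn X' b')
    (hpos' : ∀ (y : X') (r : ℝ), 0 < r → μ' (ball y r) ≠ 0)
    {h : ℝ} (hh : 0 < h) :
    ∃ Λ : ℝ≥0, 1 ≤ Λ ∧ ∀ A' : Set X',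
      μ' (hBdry A' h) ≤ (Λ : ℝ≥0∞) * μ' (hBdry A' (2 * b')) := by
  obtain ⟨E, hE1, hE⟩ := bdry_pt hconn' hb' hh
  have hE0 : 0 < E := by linarith
  set D : ℝ := 2 * E + b' with hD
  obtain ⟨Λ', hΛ'0, hΛ'⟩ := doubling_iter μ' hDV' (show (0:ℝ) < b' / 2 by linarith) (D + 1 + E)
  refine ⟨Λ' + 1, le_add_of_nonneg_left zero_le, fun A' => ?_⟩
  by_cases hA : A'.Nonempty
  · by_cases hAc : A'ᶜ.Nonempty
    · -- main case
      have hclaim : ∀ y : X', ∃ p : X', y ∈ hBdry A' h →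
          dist p y ≤ E ∧ infDist p A' ≤ b' ∧ infDist p A'ᶜ ≤ b' := by
        intro y
        by_cases hy : y ∈ hBdry A' h
        · obtain ⟨p, hp⟩ := hE A' y hA hAc hy.1 hy.2
          exact ⟨p, fun _ => hp⟩
        · exact ⟨Classical.arbitrary X', fun hy' => absurd hy' hy⟩
      choose p hp using hclaim
      have key : μ' (hBdry A' h) ≤ (Λ' : ℝ≥0∞) * μ' (hBdry A' (2 * b')) := by
        refine workhorse μ' μ' hpos' (hBdry A' h) (hBdry A' (2 * b'))
          (measurableSet_hBdry _ _) p (show (0:ℝ) < D by linarith) (show (0:ℝ) < b'/2 by linarith)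
          Λ' ?_ ?_ ?_
        · intro y hy q hq
          obtain ⟨hp1, hp2, hp3⟩ := hp y hy
          rw [mem_ball] at hq
          constructor
          · show infDist q A' ≤ 2 * b'
            calc infDist q A' ≤ infDist (p y) A' + dist q (p y) := infDist_le_infDist_add_dist
              _ ≤ b' + b' / 2 := add_le_add hp2 hq.le
              _ ≤ 2 * b' := by linarith
          · show infDist q A'ᶜ ≤ 2 * b'
            calc infDist q A'ᶜ ≤ infDist (p y) A'ᶜ + dist q (p y) := infDist_le_infDist_add_dist
              _ ≤ b' + b' / 2 := add_le_add hp3 hq.le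
              _ ≤ 2 * b' := by linarith
        · intro y hy y' hy' hyy'
          obtain ⟨hp1, _, _⟩ := hp y hy
          obtain ⟨hp1', _, _⟩ := hp y' hy'
          refine ball_disjoint_ball ?_
          have htri : dist y y' ≤ dist y (p y) + dist (p y) (p y') + dist (p y') y' :=
            dist_triangle4 _ _ _ _
          have hp1a : dist y (p y) ≤ E := by rw [dist_comm]; exact hp1
          linarith [hp1']
        · intro y hy
          obtain ⟨hp1, _, _⟩ := hp y hy
          calc μ' (ball y (D + 1)) ≤ μ' (ball (p y) (D + 1 + E)) := by
                refine measure_mono fun u hu => ?_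
                rw [mem_ball] at hu ⊢
                calc dist u (p y) ≤ dist u y + dist y (p y) := dist_triangle _ _ _
                  _ < D + 1 + E := by rw [dist_comm y (p y)]; linarith
            _ ≤ (Λ' : ℝ≥0∞) * μ' (ball (p y) (b' / 2)) := hΛ' _
      refine key.trans (mul_le_mul_left ?_ _)
      exact_mod_cast (le_self_add : Λ' ≤ Λ' + 1)
    · -- A' = univ
      have : A' = univ := by
        rw [← compl_compl A', not_nonempty_iff_eq_empty.mp hAc, compl_empty]
      subst this
      rw [hBdry_of_univ hh, hBdry_of_univ (by linarith : (0:ℝ) < 2 * b')]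
      exact le_mul_of_one_le_left zero_le (by exact_mod_cast le_add_of_nonneg_left zero_le)
  · -- A' = ∅
    have : A' = ∅ := not_nonempty_iff_eq_empty.mp hA
    subst this
    rw [hBdry_of_empty hh, hBdry_of_empty (by linarith : (0:ℝ) < 2 * b')]
    exact le_mul_of_one_le_left zero_le (by exact_mod_cast le_add_of_nonneg_left zero_le)

end L2

/-! ### Degenerate profiles -/

section ProfileTop
variable {X : Type*} [MetricSpace X] [MeasurableSpace X] (μ : Measure X)

lemma profile_eq_top {h' : ℝ} {t : ℝ≥0∞}
    (H : ∀ A : Set X, MeasurableSet A → μ A ≠ ∞ → t ≤ μ A → μ (hBdry A h') = ∞) :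
    profile μ h' t = ∞ := by
  rw [profile]
  refine iInf_eq_top.mpr fun A => iInf_eq_top.mpr fun h1 => iInf_eq_top.mpr fun h2 =>
    iInf_eq_top.mpr fun h3 => H A h1 h2 h3

lemma profile_eq_top_of_null (hnull : ∀ s : Set X, μ s = 0) {h' : ℝ} {t : ℝ≥0∞}
    (ht : 0 < t) : profile μ h' t = ∞ :=
  profile_eq_top μ fun A _ _ h3 => absurd (h3.trans (hnull A).le) ht.not_ge

lemma profile_eq_top_of_inf (hinf : ∀ (x : X) (r : ℝ), 0 < r → μ (ball x r) = ∞)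
    {b : ℝ} (hb : 0 < b) {t : ℝ≥0∞} (ht : 0 < t) : profile μ (2 * b) t = ∞ := by
  refine profile_eq_top μ fun A hmeas hfin hge => ?_
  have hA : A.Nonempty := nonempty_of_measure_ne_zero (fun h0 => ht.not_ge (hge.trans h0.le))
  obtain ⟨a, ha⟩ := hA
  have hsub : ball a (2 * b) ⊆ hBdry A (2 * b) := by
    intro q hq
    rw [mem_ball] at hq
    constructor
    · show infDist q A ≤ 2 * b
      exact (infDist_le_dist_of_mem ha).trans hq.le
    · show infDist q Aᶜ ≤ 2 * b
      have : ¬ (ball q b ⊆ A) := by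
        intro hsub'
        exact hfin (top_le_iff.mp ((hinf q b hb) ▸ measure_mono hsub'))
      obtain ⟨w, hw1, hw2⟩ := not_subset.mp this
      have hqw : dist q w ≤ 2 * b := by
        have := mem_ball.mp hw1
        rw [dist_comm] at this
        linarith
      exact (infDist_le_dist_of_mem (show w ∈ Aᶜ from hw2)).trans hqw
  exact top_le_iff.mp ((hinf a (2 * b) (by linarith)) ▸ measure_mono hsub)

end ProfileTop
/-! ### Coarse inverse -/

section Inverse
variable {X X' : Type*} [MetricSpace X] [MeasurableSpace X] [MetricSpace X'] [MeasurableSpace X']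

lemma inverse_lse [Nonempty X] (μ : Measure X) (μ' : Measure X')
    (f : X → X') {C₁ C₂ : ℝ} {C₃ : ℝ≥0} (hf : LargeScaleEquiv μ μ' f C₁ C₂ C₃)
    (hDV' : DVloc μ') :
    ∃ (g : X' → X) (C₁' C₂' : ℝ) (C₃' : ℝ≥0), LargeScaleEquiv μ' μ g C₁' C₂' C₃' := by
  obtain ⟨hC₁, hC₂, hC₃, hdens, hqi, hball⟩ := hf
  have hC₂0 : (0:ℝ) < C₂ := lt_of_lt_of_le one_pos hC₂
  choose g hg using hdens
  obtain ⟨Λ, hΛ0, hΛ⟩ := doubling_iter μ' hDV' one_pos (C₁ + 1)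
  refine ⟨g, C₂ * (C₁ + C₂), C₂ * (2 * C₁ + C₂ + 1), max 1 (C₃ * Λ), ?_, ?_, ?_, ?_, ?_, ?_⟩
  · positivity
  · nlinarith
  · exact le_max_left _ _
  · -- density of g
    intro x
    refine ⟨f x, ?_⟩
    have h1 := hg (f x)
    have h2 := (hqi x (g (f x))).1
    exact qd_upper hC₂0 (h2.trans h1)
  · -- quasi-isometry bounds for g
    intro y y'
    have hgy := hg y
    have hgy' := hg y'
    have hup := (hqi (g y) (g y')).2
    have hlo := (hqi (g y) (g y')).1
    have htri1 : dist y y' ≤ dist (f (g y)) (f (g y')) + 2 * C₁ := by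
      have := dist_triangle4 y (f (g y)) (f (g y')) y'
      have h3 : dist (f (g y')) y' = dist y' (f (g y')) := dist_comm _ _
      linarith
    have htri2 : dist (f (g y)) (f (g y')) ≤ dist y y' + 2 * C₁ := by
      have := dist_triangle4 (f (g y)) y y' (f (g y'))
      have h3 : dist (f (g y)) y = dist y (f (g y)) := dist_comm _ _
      linarith
    have hd : dist (g y) (g y') ≤ C₂ * (dist (f (g y)) (f (g y')) + C₂) := qd_upper hC₂0 hlo
    constructor
    · -- lower bound
      refine qd_lower (by positivity) ?_
      have h4 : dist y y' ≤ C₂ * dist (g y) (g y') + C₂ + 2 * C₁ := by linarith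
      have h5 : C₂ ≤ C₂ * (2 * C₁ + C₂ + 1) := by nlinarith
      have h6 : C₂ + 2 * C₁ ≤ C₂ * (2 * C₁ + C₂ + 1) := by nlinarith
      have h7 : C₂ * (2 * C₁ + C₂ + 1) ≤ (C₂ * (2 * C₁ + C₂ + 1)) * (C₂ * (2 * C₁ + C₂ + 1)) := by
        nlinarith
      nlinarith [dist_nonneg (x := g y) (y := g y')]
    · -- upper bound
      have h4 : dist (g y) (g y') ≤ C₂ * dist y y' + C₂ * (2 * C₁ + C₂) := by nlinarith
      have h5 : C₂ * dist y y' ≤ (C₂ * (2 * C₁ + C₂ + 1)) * dist y y' :=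
        mul_le_mul_of_nonneg_right (by nlinarith) dist_nonneg
      have h6 : C₂ * (2 * C₁ + C₂ + 1) = C₂ * (2 * C₁ + C₂) + C₂ := by ring
      linarith
  · -- measure comparison
    intro y
    have hgy := hg y
    have hb1 := (hball (g y)).1
    have hb2 := (hball (g y)).2
    have hsub1 : ball y 1 ⊆ ball (f (g y)) (C₁ + 1) := by
      intro u hu
      rw [mem_ball] at hu ⊢
      calc dist u (f (g y)) ≤ dist u y + dist y (f (g y)) := dist_triangle _ _ _
        _ < 1 + C₁ := by linarith
        _ = C₁ + 1 := by ring
    have hsub2 : ball (f (g y)) 1 ⊆ ball y (C₁ + 1) := by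
      intro u hu
      rw [mem_ball] at hu ⊢
      calc dist u y ≤ dist u (f (g y)) + dist (f (g y)) y := dist_triangle _ _ _
        _ < 1 + C₁ := by rw [dist_comm (f (g y)) y]; linarith
        _ = C₁ + 1 := by ring
    have hK0 : (max 1 (C₃ * Λ)) ≠ 0 :=
      (lt_of_lt_of_le one_pos (le_max_left 1 (C₃ * Λ))).ne'
    constructor
    · -- (max)⁻¹ * μ'(ball y 1) ≤ μ(ball (g y) 1)
      refine inv_mul_le_of_le_mul' hK0 (le_max_right 1 (C₃ * Λ)) ?_
      calc μ' (ball y 1) ≤ μ' (ball (f (g y)) (C₁ + 1)) := measure_mono hsub1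
        _ ≤ (Λ : ℝ≥0∞) * μ' (ball (f (g y)) 1) := hΛ _
        _ ≤ (Λ : ℝ≥0∞) * ((C₃ : ℝ≥0∞) * μ (ball (g y) 1)) := mul_le_mul_right hb2 _
        _ = ((C₃ * Λ : ℝ≥0) : ℝ≥0∞) * μ (ball (g y) 1) := by
            rw [ENNReal.coe_mul, ← mul_assoc, mul_comm (Λ:ℝ≥0∞) (C₃:ℝ≥0∞)]
    · -- μ(ball (g y) 1) ≤ max * μ'(ball y 1)
      have h1 : μ (ball (g y) 1) ≤ (C₃ : ℝ≥0∞) * μ' (ball (f (g y)) 1) :=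
        le_mul_of_inv_mul_le (fun h => by simp [h] at hC₃) hb1
      calc μ (ball (g y) 1) ≤ (C₃ : ℝ≥0∞) * μ' (ball (f (g y)) 1) := h1
        _ ≤ (C₃ : ℝ≥0∞) * μ' (ball y (C₁ + 1)) := mul_le_mul_right (measure_mono hsub2) _
        _ ≤ (C₃ : ℝ≥0∞) * ((Λ : ℝ≥0∞) * μ' (ball y 1)) := mul_le_mul_right (hΛ _) _
        _ = ((C₃ * Λ : ℝ≥0) : ℝ≥0∞) * μ' (ball y 1) := by rw [ENNReal.coe_mul, mul_assoc]
        _ ≤ ((max 1 (C₃ * Λ) : ℝ≥0) : ℝ≥0∞) * μ' (ball y 1) := by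
            exact mul_le_mul_left (by exact_mod_cast le_max_right 1 (C₃ * Λ)) _

end Inverse
/-! ### The main one-sided profile comparison -/

section Main
variable {X X' : Type*} [MetricSpace X] [MeasurableSpace X] [BorelSpace X]
  [MetricSpace X'] [MeasurableSpace X'] [BorelSpace X']

set_option maxHeartbeats 4000000 in
lemma main_ineq [Nonempty X] [Nonempty X']
    (μ : Measure X) [SigmaFinite μ] (μ' : Measure X') [SigmaFinite μ']
    {b b' : ℝ} (hb : 0 < b) (hb' : 0 < b')
    (hDV : DVloc μ) (hDV' : DVloc μ') (hconn' : UnifConn X' b')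
    (f : X → X') {C₁ C₂ : ℝ} {C₃ : ℝ≥0} (hf : LargeScaleEquiv μ μ' f C₁ C₂ C₃)
    (hposX : ∀ (x : X) (r : ℝ), 0 < r → μ (ball x r) ≠ 0)
    (hposX' : ∀ (y : X') (r : ℝ), 0 < r → μ' (ball y r) ≠ 0) :
    ∃ K₃ K₄ : ℝ≥0, 0 < K₃ ∧ 0 < K₄ ∧ ∀ t : ℝ≥0∞, 0 < t →
      profile μ (2 * b) t ≤ (K₃ : ℝ≥0∞) * profile μ' (2 * b') ((K₄ : ℝ≥0∞) * t) := by
  obtain ⟨hC₁, hC₂, hC₃, hdens, hqi, hmeasf⟩ := hf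
  have hC₂0 : (0:ℝ) < C₂ := lt_of_lt_of_le one_pos hC₂
  have hC₃0 : C₃ ≠ 0 := fun h => by simp [h] at hC₃
  choose pa hpa using hdens
  -- convenient distance estimate
  have hflip : ∀ (u v : X) (r : ℝ), dist u v ≤ r → dist (f u) (f v) ≤ C₂ * (r + 1) := by
    intro u v r huv
    have := (hqi u v).2
    nlinarith
  -- real constants
  set ρ : ℝ := C₁ + 2 * C₂ with hρdef
  set σ : ℝ := C₁ + 3 * C₂ + C₂ * (2 * b + 3) + 1 with hσdef
  set σ₁ : ℝ := C₁ + 3 * C₂ + 1 with hσ₁def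
  set σ₂ : ℝ := σ + C₂ * (2 * b + 3) with hσ₂def
  set ρ₂ : ℝ := C₁ + C₂ * (2 * b + 3) with hρ₂def
  set ρ₃ : ℝ := ρ₂ + C₂ * (2 * b + 3) with hρ₃def
  have hρ₃0 : 0 < ρ₃ := by nlinarith
  have hσ₂0 : 0 < σ₂ := by nlinarith
  obtain ⟨Ea, hEa1, hEa⟩ := bdry_pt hconn' hb' hρ₃0
  obtain ⟨Ec, hEc1, hEc⟩ := bdry_pt hconn' hb' hσ₂0
  set E₃ : ℝ := max (Ea + C₂ * (2 * b + 3)) Ec with hE₃def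
  have hE₃0 : 0 < E₃ := lt_of_lt_of_le (by nlinarith) (le_max_left _ _)
  set D₃ : ℝ := C₂ * (C₂ + 2 * E₃ + b') + 1 with hD₃def
  set D₂ : ℝ := C₂ * (C₂ + 2) + 1 with hD₂def
  set D₁ : ℝ := 2 * C₁ + 3 * C₂ + 1 with hD₁def
  have hD₃0 : (0:ℝ) < D₃ := by nlinarith
  have hD₂0 : (0:ℝ) < D₂ := by nlinarith
  have hD₁0 : (0:ℝ) < D₁ := by nlinarith
  -- doubling constants
  obtain ⟨ΛX₃, hΛX₃0, hΛX₃⟩ := doubling_iter μ hDV one_pos (D₃ + 1)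
  obtain ⟨ΛX₂, hΛX₂0, hΛX₂⟩ := doubling_iter μ hDV one_pos (D₂ + 1)
  obtain ⟨Λ'₃, hΛ'₃0, hΛ'₃⟩ := doubling_iter μ' hDV' (show (0:ℝ) < b'/2 by linarith) (E₃ + 1)
  obtain ⟨Λ'₁, hΛ'₁0, hΛ'₁⟩ := doubling_iter μ' hDV' one_pos (D₁ + 1 + C₁)
  -- boundary comparison constants
  obtain ⟨Λρ, hΛρ1, hΛρ⟩ := bdry_compare μ' hb' hDV' hconn' hposX'
    (show (0:ℝ) < ρ + 1 by nlinarith)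
  obtain ⟨Λσ, hΛσ1, hΛσ⟩ := bdry_compare μ' hb' hDV' hconn' hposX'
    (show (0:ℝ) < σ + C₁ by nlinarith)
  set c₁ : ℝ≥0 := Λ'₁ * C₃ with hc₁def
  set c₂ : ℝ≥0 := ΛX₂ * C₃ with hc₂def
  set c₃ : ℝ≥0 := ΛX₃ * C₃ * Λ'₃ with hc₃def
  have hc₁0 : c₁ ≠ 0 := (mul_pos hΛ'₁0 (lt_of_lt_of_le one_pos hC₃)).ne'
  have hc₃0 : 0 < c₃ := mul_pos (mul_pos hΛX₃0 (lt_of_lt_of_le one_pos hC₃)) hΛ'₃0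
  set K₄ : ℝ≥0 := 2 * c₁ with hK₄def
  set K₃ : ℝ≥0 := c₃ + c₂ * (2 * Λσ + Λρ) with hK₃def
  have hK₄0 : 0 < K₄ := by positivity
  have hK₃0 : 0 < K₃ := lt_of_lt_of_le hc₃0 le_self_add
  have hK₃ne : K₃ ≠ 0 := hK₃0.ne'
  refine ⟨K₃, K₄, hK₃0, hK₄0, ?_⟩
  intro t ht
  -- the key pointwise bound
  have hkey : ∀ A' : Set X', MeasurableSet A' → μ' A' ≠ ∞ → (K₄ : ℝ≥0∞) * t ≤ μ' A' →
      profile μ (2 * b) t ≤ (K₃ : ℝ≥0∞) * μ' (hBdry A' (2 * b')) := by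
    intro A' hA'meas hA'fin hA'ge
    by_cases hdtop : μ' (hBdry A' (2 * b')) = ∞
    · rw [hdtop, ENNReal.mul_top (by exact_mod_cast hK₃ne)]
      exact le_top
    have hwit : ∀ A : Set X, MeasurableSet A → μ A ≠ ∞ → t ≤ μ A →
        profile μ (2 * b) t ≤ μ (hBdry A (2 * b)) := by
      intro A h1 h2 h3
      rw [profile]
      exact iInf_le_of_le A (iInf_le_of_le h1 (iInf_le_of_le h2 (iInf_le _ h3)))
    have hA'pos : μ' A' ≠ 0 := by
      intro h0
      have : (0:ℝ≥0∞) < (K₄:ℝ≥0∞) * t :=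
        ENNReal.mul_pos (by exact_mod_cast hK₄0.ne') ht.ne'
      exact (this.trans_le hA'ge).ne' h0
    have hA'ne : A'.Nonempty := nonempty_of_measure_ne_zero hA'pos
    -- the outer pullback set
    set Aout : Set X := ⋃ x ∈ {x : X | infDist (f x) A' ≤ C₁}, ball x 1 with hAoutdef
    have hAout_meas : MeasurableSet Aout :=
      (isOpen_biUnion fun _ _ => isOpen_ball).measurableSet
    have hmemA : ∀ z : X, z ∈ Aout ↔ ∃ x : X, infDist (f x) A' ≤ C₁ ∧ dist z x < 1 := by
      intro z
      simp only [hAoutdef, mem_iUnion, mem_setOf_eq, mem_ball, exists_prop]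
    have hAout_ne : Aout.Nonempty := by
      obtain ⟨y₀, hy₀⟩ := hA'ne
      refine ⟨pa y₀, (hmemA _).mpr ⟨pa y₀, ?_, by simp⟩⟩
      have h1 := infDist_le_dist_of_mem (x := f (pa y₀)) hy₀
      rw [dist_comm] at h1
      exact h1.trans (hpa y₀)
    -- W1-type estimate, used for A' and for Deep
    have hW1 : ∀ (T' : Set X') (G : Set X), MeasurableSet G →
        (∀ y ∈ T', ball (pa y) 1 ⊆ G) → μ' T' ≤ (c₁ : ℝ≥0∞) * μ G := by
      intro T' G hG hball
      refine workhorse μ' μ hposX' T' G hG pa hD₁0 one_pos c₁ hball ?_ ?_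
      · intro y _ y' _ hyy'
        refine ball_disjoint_ball ?_
        have htri := dist_triangle4 y (f (pa y)) (f (pa y')) y'
        have h1 := hpa y
        have h2 := hpa y'
        rw [dist_comm (f (pa y')) y'] at htri
        have hff : 3 * C₂ + 1 < dist (f (pa y)) (f (pa y')) := by linarith
        have hup := (hqi (pa y) (pa y')).2
        nlinarith
      · intro y _
        have hsub : ball y (D₁ + 1) ⊆ ball (f (pa y)) (D₁ + 1 + C₁) := by
          intro u hu
          rw [mem_ball] at hu ⊢
          have := hpa y
          calc dist u (f (pa y)) ≤ dist u y + dist y (f (pa y)) := dist_triangle _ _ _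
            _ < D₁ + 1 + C₁ := by linarith
        calc μ' (ball y (D₁ + 1)) ≤ μ' (ball (f (pa y)) (D₁ + 1 + C₁)) := measure_mono hsub
          _ ≤ (Λ'₁ : ℝ≥0∞) * μ' (ball (f (pa y)) 1) := hΛ'₁ _
          _ ≤ (Λ'₁ : ℝ≥0∞) * ((C₃ : ℝ≥0∞) * μ (ball (pa y) 1)) :=
              mul_le_mul_right (hmeasf (pa y)).2 _
          _ = (c₁ : ℝ≥0∞) * μ (ball (pa y) 1) := by
              rw [hc₁def, ENNReal.coe_mul, mul_assoc]
    -- W2: upper bound for μ Aout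
    have hW2 : μ Aout ≤ (c₂ : ℝ≥0∞) * μ' (nbhd A' (ρ + 1)) := by
      have hfz : ∀ z ∈ Aout, infDist (f z) A' ≤ ρ := by
        intro z hz
        obtain ⟨x, hx1, hx2⟩ := (hmemA z).mp hz
        have hd := hflip z x 1 hx2.le
        calc infDist (f z) A' ≤ infDist (f x) A' + dist (f z) (f x) :=
              infDist_le_infDist_add_dist
          _ ≤ ρ := by rw [hρdef]; nlinarith
      refine workhorse μ μ' hposX Aout (nbhd A' (ρ + 1)) (measurableSet_nbhd _ _) f
        hD₂0 one_pos c₂ ?_ ?_ ?_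
      · intro z hz u hu
        rw [mem_ball] at hu
        show infDist u A' ≤ ρ + 1
        calc infDist u A' ≤ infDist (f z) A' + dist u (f z) := infDist_le_infDist_add_dist
          _ ≤ ρ + 1 := by have := hfz z hz; linarith
      · intro z _ z' _ hzz'
        refine ball_disjoint_ball ?_
        have hlo := (hqi z z').1
        have hinv : C₂⁻¹ * D₂ ≤ C₂⁻¹ * dist z z' :=
          mul_le_mul_of_nonneg_left hzz'.le (by positivity)
        have hD₂inv : C₂⁻¹ * D₂ = C₂ + 2 + C₂⁻¹ := by
          rw [hD₂def]; field_simp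
        have hC₂inv : 0 < C₂⁻¹ := by positivity
        linarith
      · intro z _
        calc μ (ball z (D₂ + 1)) ≤ (ΛX₂ : ℝ≥0∞) * μ (ball z 1) := hΛX₂ _
          _ ≤ (ΛX₂ : ℝ≥0∞) * ((C₃ : ℝ≥0∞) * μ' (ball (f z) 1)) :=
              mul_le_mul_right (le_mul_of_inv_mul_le hC₃0 (hmeasf z).1) _
          _ = (c₂ : ℝ≥0∞) * μ' (ball (f z) 1) := by rw [hc₂def, ENNReal.coe_mul, mul_assoc]
    have hnbhd : μ' (nbhd A' (ρ + 1)) ≤ μ' A' + (Λρ : ℝ≥0∞) * μ' (hBdry A' (2 * b')) := by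
      calc μ' (nbhd A' (ρ + 1)) ≤ μ' (A' ∪ hBdry A' (ρ + 1)) := measure_mono nbhd_subset_union
        _ ≤ μ' A' + μ' (hBdry A' (ρ + 1)) := measure_union_le _ _
        _ ≤ μ' A' + (Λρ : ℝ≥0∞) * μ' (hBdry A' (2 * b')) := add_le_add_right (hΛρ A') _
    have hAout_fin : μ Aout ≠ ∞ := by
      refine ne_top_of_le_ne_top ?_ (hW2.trans (mul_le_mul_right hnbhd _))
      exact ENNReal.mul_ne_top ENNReal.coe_ne_top
        (ENNReal.add_ne_top.mpr ⟨hA'fin, ENNReal.mul_ne_top ENNReal.coe_ne_top hdtop⟩)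
    have hAout_low : μ' A' ≤ (c₁ : ℝ≥0∞) * μ Aout := by
      refine hW1 A' Aout hAout_meas ?_
      intro y hy u hu
      refine (hmemA u).mpr ⟨pa y, ?_, mem_ball.mp hu⟩
      calc infDist (f (pa y)) A' ≤ dist (f (pa y)) y := infDist_le_dist_of_mem hy
        _ ≤ C₁ := by rw [dist_comm]; exact hpa y
    have ht_out : t ≤ μ Aout := by
      have h1 : (c₁ : ℝ≥0∞) * (2 * t) ≤ (c₁ : ℝ≥0∞) * μ Aout := by
        refine le_trans ?_ hAout_low
        refine le_trans (le_of_eq ?_) hA'ge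
        rw [hK₄def]
        push_cast
        ring
      have h2 : 2 * t ≤ μ Aout := enn_cancel_le hc₁0 h1
      calc t = 1 * t := (one_mul t).symm
        _ ≤ 2 * t := mul_le_mul_left one_le_two t
        _ ≤ μ Aout := h2
    -- generic boundary workhorse
    have hbd : ∀ (T : Set X) (q : X → X'),
        (∀ z ∈ T, dist (q z) (f z) ≤ E₃ ∧ infDist (q z) A' ≤ b' ∧ infDist (q z) A'ᶜ ≤ b') →
        μ T ≤ (c₃ : ℝ≥0∞) * μ' (hBdry A' (2 * b')) := by
      intro T q hq
      refine workhorse μ μ' hposX T (hBdry A' (2 * b')) (measurableSet_hBdry _ _) q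
        hD₃0 (show (0:ℝ) < b'/2 by linarith) c₃ ?_ ?_ ?_
      · intro z hz u hu
        obtain ⟨h1, h2, h3⟩ := hq z hz
        rw [mem_ball] at hu
        constructor
        · show infDist u A' ≤ 2 * b'
          calc infDist u A' ≤ infDist (q z) A' + dist u (q z) := infDist_le_infDist_add_dist
            _ ≤ 2 * b' := by linarith
        · show infDist u A'ᶜ ≤ 2 * b'
          calc infDist u A'ᶜ ≤ infDist (q z) A'ᶜ + dist u (q z) := infDist_le_infDist_add_dist
            _ ≤ 2 * b' := by linarith
      · intro z hz z' hz' hzz'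
        obtain ⟨h1, _, _⟩ := hq z hz
        obtain ⟨h1', _, _⟩ := hq z' hz'
        refine ball_disjoint_ball ?_
        have hlo := (hqi z z').1
        have hinv : C₂⁻¹ * D₃ ≤ C₂⁻¹ * dist z z' :=
          mul_le_mul_of_nonneg_left hzz'.le (by positivity)
        have hD₃inv : C₂⁻¹ * D₃ = C₂ + 2 * E₃ + b' + C₂⁻¹ := by
          rw [hD₃def]; field_simp
        have hC₂inv : 0 < C₂⁻¹ := by positivity
        have htri := dist_triangle4 (f z) (q z) (q z') (f z')
        rw [dist_comm (f z) (q z)] at htri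
        linarith [h1']
      · intro z hz
        obtain ⟨h1, _, _⟩ := hq z hz
        have hsub : ball (f z) 1 ⊆ ball (q z) (E₃ + 1) := by
          intro u hu
          rw [mem_ball] at hu ⊢
          calc dist u (q z) ≤ dist u (f z) + dist (f z) (q z) := dist_triangle _ _ _
            _ < E₃ + 1 := by rw [dist_comm (f z) (q z)]; linarith
        calc μ (ball z (D₃ + 1)) ≤ (ΛX₃ : ℝ≥0∞) * μ (ball z 1) := hΛX₃ _
          _ ≤ (ΛX₃ : ℝ≥0∞) * ((C₃ : ℝ≥0∞) * μ' (ball (f z) 1)) :=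
              mul_le_mul_right (le_mul_of_inv_mul_le hC₃0 (hmeasf z).1) _
          _ ≤ (ΛX₃ : ℝ≥0∞) * ((C₃ : ℝ≥0∞) * μ' (ball (q z) (E₃ + 1))) :=
              mul_le_mul_right (mul_le_mul_right (measure_mono hsub) _) _
          _ ≤ (ΛX₃ : ℝ≥0∞) * ((C₃ : ℝ≥0∞) * ((Λ'₃ : ℝ≥0∞) * μ' (ball (q z) (b'/2)))) :=
              mul_le_mul_right (mul_le_mul_right (hΛ'₃ _) _) _
          _ = (c₃ : ℝ≥0∞) * μ' (ball (q z) (b'/2)) := by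
              rw [hc₃def]
              push_cast
              ring
    set md := μ' (hBdry A' (2 * b')) with hmddef
    -- case split on whether Aout has nonempty complement
    by_cases hAoutc : Aoutᶜ.Nonempty
    · -- main case
      have claim : ∀ z : X, ∃ qq : X', z ∈ hBdry Aout (2 * b) →
          dist qq (f z) ≤ E₃ ∧ infDist qq A' ≤ b' ∧ infDist qq A'ᶜ ≤ b' := by
        intro z
        by_cases hz : z ∈ hBdry Aout (2 * b)
        swap
        · exact ⟨Classical.arbitrary X', fun h => absurd h hz⟩
        obtain ⟨hz1, hz2⟩ := hz
        obtain ⟨a, haA, hza⟩ := (infDist_lt_iff hAout_ne).mp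
          (lt_of_le_of_lt hz1 (by linarith : 2 * b < 2 * b + 1))
        obtain ⟨x, hx1, hax⟩ := (hmemA a).mp haA
        have hzx : dist z x ≤ 2 * b + 2 := by
          calc dist z x ≤ dist z a + dist a x := dist_triangle _ _ _
            _ ≤ 2 * b + 2 := by linarith
        have hfzfx : dist (f z) (f x) ≤ C₂ * (2 * b + 3) := by
          have h := hflip z x (2 * b + 2) hzx
          nlinarith
        have hfzA' : infDist (f z) A' ≤ ρ₂ := by
          calc infDist (f z) A' ≤ infDist (f x) A' + dist (f z) (f x) :=
                infDist_le_infDist_add_dist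
            _ ≤ ρ₂ := by rw [hρ₂def]; linarith
        obtain ⟨w, hwc, hzw⟩ := (infDist_lt_iff hAoutc).mp
          (lt_of_le_of_lt hz2 (by linarith : 2 * b < 2 * b + 1))
        have hwnI : ¬ infDist (f w) A' ≤ C₁ := by
          intro hle
          exact hwc ((hmemA w).mpr ⟨w, hle, by simp⟩)
        push_neg at hwnI
        have hfwA'c : f w ∈ A'ᶜ := by
          intro hfw
          rw [infDist_zero_of_mem hfw] at hwnI
          linarith
        have hfzfw : dist (f z) (f w) ≤ C₂ * (2 * b + 3) := by
          have h := hflip z w (2 * b + 2) (by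
            calc dist z w ≤ 2 * b + 1 := hzw.le
              _ ≤ 2 * b + 2 := by linarith)
          nlinarith
        have hfwfz : dist (f w) (f z) ≤ C₂ * (2 * b + 3) := by
          rw [dist_comm]; exact hfzfw
        have hfw2 : infDist (f w) A' ≤ ρ₃ := by
          calc infDist (f w) A' ≤ infDist (f z) A' + dist (f w) (f z) :=
                infDist_le_infDist_add_dist
            _ ≤ ρ₃ := by rw [hρ₃def]; linarith
        obtain ⟨p, hp1, hp2, hp3⟩ := hEa A' (f w) hA'ne ⟨f w, hfwA'c⟩ hfw2
          (by rw [infDist_zero_of_mem hfwA'c]; linarith)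
        refine ⟨p, fun _ => ⟨?_, hp2, hp3⟩⟩
        calc dist p (f z) ≤ dist p (f w) + dist (f w) (f z) := dist_triangle _ _ _
          _ ≤ Ea + C₂ * (2 * b + 3) := by linarith
          _ ≤ E₃ := le_max_left _ _
      choose q hq using claim
      have hbound := hbd (hBdry Aout (2 * b)) q (fun z hz => hq z hz)
      calc profile μ (2 * b) t ≤ μ (hBdry Aout (2 * b)) := hwit Aout hAout_meas hAout_fin ht_out
        _ ≤ (c₃ : ℝ≥0∞) * md := hbound
        _ ≤ (K₃ : ℝ≥0∞) * md := by
            refine mul_le_mul_left ?_ _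
            rw [hK₃def]
            exact_mod_cast (le_self_add : c₃ ≤ c₃ + c₂ * (2 * Λσ + Λρ))
    · -- Aout = univ
      have hAuniv : Aout = univ := by
        rw [not_nonempty_iff_eq_empty] at hAoutc
        rw [← compl_compl Aout, hAoutc, compl_empty]
      by_cases hβ : μ' A' ≤ 2 * ((Λσ : ℝ≥0∞) * md)
      · -- boundary of A' is large: take Aout = univ itself
        have hbound : μ (hBdry Aout (2 * b)) ≤ (K₃ : ℝ≥0∞) * md := by
          calc μ (hBdry Aout (2 * b)) ≤ μ univ := measure_mono (subset_univ _)
            _ = μ Aout := by rw [hAuniv]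
            _ ≤ (c₂ : ℝ≥0∞) * μ' (nbhd A' (ρ + 1)) := hW2
            _ ≤ (c₂ : ℝ≥0∞) * (μ' A' + (Λρ : ℝ≥0∞) * md) := mul_le_mul_right hnbhd _
            _ ≤ (c₂ : ℝ≥0∞) * (2 * ((Λσ : ℝ≥0∞) * md) + (Λρ : ℝ≥0∞) * md) :=
                mul_le_mul_right (add_le_add_left hβ _) _
            _ = ((c₂ * (2 * Λσ + Λρ) : ℝ≥0) : ℝ≥0∞) * md := by push_cast; ring
            _ ≤ (K₃ : ℝ≥0∞) * md := by
                refine mul_le_mul_left ?_ _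
                rw [hK₃def]
                exact_mod_cast (le_add_self : c₂ * (2 * Λσ + Λρ) ≤ c₃ + c₂ * (2 * Λσ + Λρ))
        exact (hwit Aout hAout_meas hAout_fin ht_out).trans hbound
      · push_neg at hβ
        have hA'cne : A'ᶜ.Nonempty := by
          by_contra hA'c
          rw [not_nonempty_iff_eq_empty] at hA'c
          have hA'univ : A' = univ := by rw [← compl_compl A', hA'c, compl_empty]
          have h1 : μ' A' ≤ md := by
            rw [hmddef, hA'univ, hBdry_of_univ (by linarith : (0:ℝ) < 2 * b')]
          have h2 : md ≤ 2 * ((Λσ : ℝ≥0∞) * md) := by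
            rw [← mul_assoc]
            refine le_mul_of_one_le_left zero_le ?_
            calc (1 : ℝ≥0∞) = 1 * 1 := (one_mul 1).symm
              _ ≤ 2 * (Λσ : ℝ≥0∞) := mul_le_mul' one_le_two (by exact_mod_cast hΛσ1)
          exact lt_irrefl _ ((h1.trans h2).trans_lt hβ)
        set Deep : Set X' := {y | σ + C₁ ≤ infDist y A'ᶜ} with hDeepdef
        set Ain : Set X := ⋃ x ∈ {x : X | σ ≤ infDist (f x) A'ᶜ}, ball x 1 with hAindef
        have hAin_meas : MeasurableSet Ain :=
          (isOpen_biUnion fun _ _ => isOpen_ball).measurableSet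
        have hmemAin : ∀ z : X, z ∈ Ain ↔ ∃ x : X, σ ≤ infDist (f x) A'ᶜ ∧ dist z x < 1 := by
          intro z
          simp only [hAindef, mem_iUnion, mem_setOf_eq, mem_ball, exists_prop]
        have hW1in : μ' Deep ≤ (c₁ : ℝ≥0∞) * μ Ain := by
          refine hW1 Deep Ain hAin_meas ?_
          intro y hy u hu
          refine (hmemAin u).mpr ⟨pa y, ?_, mem_ball.mp hu⟩
          have h1 : infDist y A'ᶜ ≤ infDist (f (pa y)) A'ᶜ + dist y (f (pa y)) :=
            infDist_le_infDist_add_dist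
          have h2 := hpa y
          have h3 : σ + C₁ ≤ infDist y A'ᶜ := hy
          linarith
        have hdeep : μ' A' ≤ μ' Deep + (Λσ : ℝ≥0∞) * md := by
          have hsub : A' ⊆ Deep ∪ hBdry A' (σ + C₁) := by
            intro y hy
            by_cases hyD : y ∈ Deep
            · exact Or.inl hyD
            · refine Or.inr ⟨?_, ?_⟩
              · show infDist y A' ≤ σ + C₁
                rw [infDist_zero_of_mem hy]
                nlinarith
              · show infDist y A'ᶜ ≤ σ + C₁
                have h4 : ¬ (σ + C₁ ≤ infDist y A'ᶜ) := hyD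
                linarith [not_le.mp h4]
          calc μ' A' ≤ μ' (Deep ∪ hBdry A' (σ + C₁)) := measure_mono hsub
            _ ≤ μ' Deep + μ' (hBdry A' (σ + C₁)) := measure_union_le _ _
            _ ≤ μ' Deep + (Λσ : ℝ≥0∞) * md := add_le_add_right (hΛσ A') _
        have hhalf : (Λσ : ℝ≥0∞) * md ≤ μ' A' / 2 := by
          rw [ENNReal.le_div_iff_mul_le (Or.inl two_ne_zero) (Or.inl ENNReal.ofNat_ne_top)]
          rw [mul_comm ((Λσ : ℝ≥0∞) * md) 2]
          exact hβ.le
        have hdeep_ge : μ' A' / 2 ≤ μ' Deep := by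
          have h1 : μ' A' - (Λσ : ℝ≥0∞) * md ≤ μ' Deep := by
            rw [tsub_le_iff_right]
            exact hdeep
          have h2 : μ' A' - μ' A' / 2 ≤ μ' A' - (Λσ : ℝ≥0∞) * md := tsub_le_tsub_left hhalf _
          rw [ENNReal.sub_half hA'fin] at h2
          exact h2.trans h1
        have ht_in : t ≤ μ Ain := by
          have h1 : (c₁ : ℝ≥0∞) * t ≤ μ' A' / 2 := by
            rw [ENNReal.le_div_iff_mul_le (Or.inl two_ne_zero) (Or.inl ENNReal.ofNat_ne_top)]
            calc (c₁ : ℝ≥0∞) * t * 2 = (K₄ : ℝ≥0∞) * t := by rw [hK₄def]; push_cast; ring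
              _ ≤ μ' A' := hA'ge
          have h2 : (c₁ : ℝ≥0∞) * t ≤ (c₁ : ℝ≥0∞) * μ Ain :=
            (h1.trans hdeep_ge).trans hW1in
          exact enn_cancel_le hc₁0 h2
        have hAin_fin : μ Ain ≠ ∞ := by
          have hsub : Ain ⊆ Aout := by
            intro z hz
            obtain ⟨x, hx1, hx2⟩ := (hmemAin z).mp hz
            refine (hmemA z).mpr ⟨x, ?_, hx2⟩
            have hfxA' : f x ∈ A' := by
              by_contra hc
              rw [infDist_zero_of_mem (show f x ∈ A'ᶜ from hc)] at hx1
              nlinarith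
            rw [infDist_zero_of_mem hfxA']
            linarith
          exact ne_top_of_le_ne_top hAout_fin (measure_mono hsub)
        have hAin_cne : Ainᶜ.Nonempty := by
          by_contra hc
          rw [not_nonempty_iff_eq_empty] at hc
          have hAinuniv : Ain = univ := by rw [← compl_compl Ain, hc, compl_empty]
          obtain ⟨w', hw'⟩ := hA'cne
          have hmem : pa w' ∈ Ain := hAinuniv ▸ mem_univ _
          obtain ⟨x', hx'1, hx'2⟩ := (hmemAin _).mp hmem
          have hd1 : dist (f (pa w')) (f x') ≤ C₂ * (1 + 1) := hflip _ _ 1 hx'2.le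
          have hd1' : dist (f x') (f (pa w')) ≤ C₂ * 2 := by
            rw [dist_comm]; nlinarith
          have hd2 : infDist (f x') A'ᶜ ≤ dist (f x') w' := infDist_le_dist_of_mem hw'
          have hd3 : dist (f x') w' ≤ dist (f x') (f (pa w')) + dist (f (pa w')) w' :=
            dist_triangle _ _ _
          have hd4 := hpa w'
          rw [dist_comm (f (pa w')) w'] at hd3
          nlinarith
        have hAin_ne : Ain.Nonempty :=
          nonempty_of_measure_ne_zero (fun h0 => (ht.trans_le ht_in).ne' h0)
        have claim : ∀ z : X, ∃ qq : X', z ∈ hBdry Ain (2 * b) →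
            dist qq (f z) ≤ E₃ ∧ infDist qq A' ≤ b' ∧ infDist qq A'ᶜ ≤ b' := by
          intro z
          by_cases hz : z ∈ hBdry Ain (2 * b)
          swap
          · exact ⟨Classical.arbitrary X', fun h => absurd h hz⟩
          obtain ⟨hz1, hz2⟩ := hz
          obtain ⟨a, haA, hza⟩ := (infDist_lt_iff hAin_ne).mp
            (lt_of_le_of_lt hz1 (by linarith : 2 * b < 2 * b + 1))
          obtain ⟨x, hx1, hax⟩ := (hmemAin a).mp haA
          have hzx : dist z x ≤ 2 * b + 2 := by
            calc dist z x ≤ dist z a + dist a x := dist_triangle _ _ _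
              _ ≤ 2 * b + 2 := by linarith
          have hfzfx : dist (f z) (f x) ≤ C₂ * (2 * b + 3) := by
            have h := hflip z x (2 * b + 2) hzx
            nlinarith
          have hlow : σ₁ ≤ infDist (f z) A'ᶜ := by
            have h1 : infDist (f x) A'ᶜ ≤ infDist (f z) A'ᶜ + dist (f x) (f z) :=
              infDist_le_infDist_add_dist
            rw [dist_comm (f x) (f z)] at h1
            rw [hσ₁def]
            rw [hσdef] at hx1
            linarith
          obtain ⟨w, hwc, hzw⟩ := (infDist_lt_iff hAin_cne).mp
            (lt_of_le_of_lt hz2 (by linarith : 2 * b < 2 * b + 1))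
          have hwnI : ¬ σ ≤ infDist (f w) A'ᶜ := fun hle =>
            hwc ((hmemAin w).mpr ⟨w, hle, by simp⟩)
          push_neg at hwnI
          have hfzfw : dist (f z) (f w) ≤ C₂ * (2 * b + 3) := by
            have h := hflip z w (2 * b + 2) (by
              calc dist z w ≤ 2 * b + 1 := hzw.le
                _ ≤ 2 * b + 2 := by linarith)
            nlinarith
          have hupp : infDist (f z) A'ᶜ ≤ σ₂ := by
            have h1 : infDist (f z) A'ᶜ ≤ infDist (f w) A'ᶜ + dist (f z) (f w) :=
              infDist_le_infDist_add_dist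
            rw [hσ₂def]
            linarith
          have hfzA' : f z ∈ A' := by
            by_contra hc
            have h0 : infDist (f z) A'ᶜ = 0 := infDist_zero_of_mem (show f z ∈ A'ᶜ from hc)
            rw [h0] at hlow
            rw [hσ₁def] at hlow
            linarith
          obtain ⟨p, hp1, hp2, hp3⟩ := hEc A' (f z) hA'ne hA'cne
            (by rw [infDist_zero_of_mem hfzA']; linarith) hupp
          exact ⟨p, fun _ => ⟨hp1.trans (le_max_right _ _), hp2, hp3⟩⟩
        choose q hq using claim
        have hbound := hbd (hBdry Ain (2 * b)) q (fun z hz => hq z hz)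
        refine (hwit Ain hAin_meas hAin_fin ht_in).trans (hbound.trans ?_)
        refine mul_le_mul_left ?_ _
        rw [hK₃def]
        exact_mod_cast (le_self_add : c₃ ≤ c₃ + c₂ * (2 * Λσ + Λρ))
  have h2 : (K₃ : ℝ≥0∞)⁻¹ * profile μ (2 * b) t ≤ profile μ' (2 * b') ((K₄ : ℝ≥0∞) * t) := by
    rw [profile]
    exact le_iInf fun A' => le_iInf fun hm => le_iInf fun hfin => le_iInf fun hge =>
      inv_mul_le_of_le_mul' hK₃ne le_rfl (hkey A' hm hfin hge)
  calc profile μ (2 * b) t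
      = (K₃ : ℝ≥0∞) * ((K₃ : ℝ≥0∞)⁻¹ * profile μ (2 * b) t) := (enn_cancel₁ hK₃ne _).symm
    _ ≤ (K₃ : ℝ≥0∞) * profile μ' (2 * b') ((K₄ : ℝ≥0∞) * t) := mul_le_mul_right h2 _

end Main

set_option maxHeartbeats 1000000 in
theorem profile_invariant_under_large_scale_equiv
    {X X' : Type*} [MetricSpace X] [MetricSpace X']
    [MeasurableSpace X] [BorelSpace X] [MeasurableSpace X'] [BorelSpace X']
    (μ : Measure X) [SigmaFinite μ] (μ' : Measure X') [SigmaFinite μ']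
    (b b' : ℝ) (hb : 0 < b) (hb' : 0 < b')
    (hDV : DVloc μ) (hDV' : DVloc μ') (hconn : UnifConn X b) (hconn' : UnifConn X' b')
    (f : X → X') (C₁ C₂ : ℝ) (C₃ : ℝ≥0)
    (hf : LargeScaleEquiv μ μ' f C₁ C₂ C₃) :
    ∃ K₁ K₂ K₃ K₄ : ℝ≥0, 0 < K₁ ∧ 0 < K₂ ∧ 0 < K₃ ∧ 0 < K₄ ∧
      ∀ t : ℝ≥0∞, 0 < t →
        (K₁ : ℝ≥0∞) * profile μ' (2 * b') ((K₂ : ℝ≥0∞) * t) ≤ profile μ (2 * b) t ∧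
        profile μ (2 * b) t ≤ (K₃ : ℝ≥0∞) * profile μ' (2 * b') ((K₄ : ℝ≥0∞) * t) := by
  have hC₃ : 1 ≤ C₃ := hf.2.2.1
  have hC₃0 : C₃ ≠ 0 := fun h => by simp [h] at hC₃
  by_cases hX' : Nonempty X'
  swap
  · -- X' is empty, hence so is X
    haveI hXempty : IsEmpty X := ⟨fun x => hX' ⟨f x⟩⟩
    haveI hX'empty : IsEmpty X' := not_nonempty_iff.mp hX'
    have hμnull : ∀ s : Set X, μ s = 0 := fun s => by
      rw [eq_empty_of_isEmpty s]; exact measure_empty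
    have hμ'null : ∀ s : Set X', μ' s = 0 := fun s => by
      rw [eq_empty_of_isEmpty s]; exact measure_empty
    refine ⟨1, 1, 1, 1, one_pos, one_pos, one_pos, one_pos, fun t ht => ?_⟩
    have ht1 : (0 : ℝ≥0∞) < ((1:ℝ≥0) : ℝ≥0∞) * t := by
      simpa using ht
    rw [profile_eq_top_of_null μ hμnull ht, profile_eq_top_of_null μ' hμ'null ht1]
    simp
  haveI := hX'
  haveI hXne : Nonempty X := ⟨(hf.2.2.2.1 (Classical.arbitrary X')).choose⟩
  by_cases hposX : ∀ (x : X) (r : ℝ), 0 < r → μ (ball x r) ≠ 0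
  swap
  · -- some null ball in X : both measures vanish
    push_neg at hposX
    obtain ⟨x₀, r₀, hr₀, h0⟩ := hposX
    have hμnull : ∀ s : Set X, μ s = 0 := fun s => all_null μ hDV hr₀ h0 s
    have hball' : μ' (ball (f x₀) 1) = 0 := by
      have h1 := (hf.2.2.2.2.2 x₀).2
      rw [hμnull (ball x₀ 1), mul_zero] at h1
      exact le_antisymm h1 zero_le
    have hμ'null : ∀ s : Set X', μ' s = 0 := fun s => all_null μ' hDV' one_pos hball' s
    refine ⟨1, 1, 1, 1, one_pos, one_pos, one_pos, one_pos, fun t ht => ?_⟩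
    have ht1 : (0 : ℝ≥0∞) < ((1:ℝ≥0) : ℝ≥0∞) * t := by simpa using ht
    rw [profile_eq_top_of_null μ hμnull ht, profile_eq_top_of_null μ' hμ'null ht1]
    simp
  have hposX' : ∀ (y : X') (r : ℝ), 0 < r → μ' (ball y r) ≠ 0 := by
    intro y r hr h0
    have hμ'null := all_null μ' hDV' hr h0
    have x : X := Classical.arbitrary X
    have h1 := (hf.2.2.2.2.2 x).1
    rw [hμ'null (ball (f x) 1)] at h1
    have h2 : μ (ball x 1) = 0 := by
      have h3 : μ (ball x 1) ≤ (C₃ : ℝ≥0∞) * 0 := le_mul_of_inv_mul_le hC₃0 h1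
      rw [mul_zero] at h3
      exact le_antisymm h3 zero_le
    exact hposX x 1 one_pos h2
  -- main case
  obtain ⟨K₃, K₄, hK₃0, hK₄0, hmain1⟩ :=
    main_ineq μ μ' hb hb' hDV hDV' hconn' f hf hposX hposX'
  obtain ⟨g, C₁', C₂', C₃', hg⟩ := inverse_lse μ μ' f hf hDV'
  obtain ⟨K₃', K₄', hK₃'0, hK₄'0, hmain2⟩ :=
    main_ineq μ' μ hb' hb hDV' hDV hconn g hg hposX' hposX
  refine ⟨K₃'⁻¹, K₄'⁻¹, K₃, K₄, ?_, ?_, hK₃0, hK₄0, fun t ht => ⟨?_, hmain1 t ht⟩⟩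
  · positivity
  · positivity
  · have hs : (0 : ℝ≥0∞) < ((K₄'⁻¹ : ℝ≥0) : ℝ≥0∞) * t := by
      refine ENNReal.mul_pos ?_ ht.ne'
      exact_mod_cast (inv_pos.mpr hK₄'0).ne'
    have h1 := hmain2 (((K₄'⁻¹ : ℝ≥0) : ℝ≥0∞) * t) hs
    have he : (K₄' : ℝ≥0∞) * (((K₄'⁻¹ : ℝ≥0) : ℝ≥0∞) * t) = t := by
      rw [ENNReal.coe_inv hK₄'0.ne']
      exact enn_cancel₁ hK₄'0.ne' t
    rw [he] at h1
    rw [ENNReal.coe_inv hK₃'0.ne']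
    exact inv_mul_le_of_le_mul' hK₃'0.ne' le_rfl h1
end
end

section
/- Let f : (X,d,μ) → (X',d',μ') be a large-scale equivalence with constants C₁, C₂, C₃ between two metric measure spaces satisfying (DV)_loc. Then there exists a constant C ≥ 1 such that for every subset A ⊆ X, μ(A) ≤ C μ'([f(A)]_{C₁}), where [f(A)]_{C₁} = {y ∈ X' : d'(y, f(A)) ≤ C₁}. -/
open Metric MeasureTheory Set ENNReal NNReal

noncomputable section

private lemma dvloc_pow {X : Type*} [MetricSpace X] [MeasurableSpace X] {μ : Measure X}
    (hDV : DVloc μ) {r : ℝ} (hr : 0 < r) (n : ℕ) :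
    ∃ K : ℝ≥0, 0 < K ∧ ∀ x : X, μ (ball x (2 ^ n * r)) ≤ (K : ℝ≥0∞) * μ (ball x r) := by
  induction n with
  | zero => exact ⟨1, one_pos, fun x => by simp⟩
  | succ n ih =>
    obtain ⟨K, hK, hKle⟩ := ih
    obtain ⟨D, hD, hDle⟩ := hDV (2 ^ n * r) (by positivity)
    refine ⟨D * K, by positivity, fun x => ?_⟩
    have h2 : (2 : ℝ) ^ (n + 1) * r = 2 * (2 ^ n * r) := by ring
    rw [h2]
    calc μ (ball x (2 * (2 ^ n * r))) ≤ (D : ℝ≥0∞) * μ (ball x (2 ^ n * r)) := hDle x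
      _ ≤ (D : ℝ≥0∞) * ((K : ℝ≥0∞) * μ (ball x r)) := by gcongr; exact hKle x
      _ = ((D * K : ℝ≥0) : ℝ≥0∞) * μ (ball x r) := by push_cast; ring

private lemma dvloc_mono {X : Type*} [MetricSpace X] [MeasurableSpace X] {μ : Measure X}
    (hDV : DVloc μ) {r R : ℝ} (hr : 0 < r) (hR : r ≤ R) :
    ∃ K : ℝ≥0, 0 < K ∧ ∀ x : X, μ (ball x R) ≤ (K : ℝ≥0∞) * μ (ball x r) := by
  obtain ⟨n, hn⟩ := pow_unbounded_of_one_lt (R / r) (one_lt_two (α := ℝ))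
  obtain ⟨K, hK, hKle⟩ := dvloc_pow hDV hr n
  refine ⟨K, hK, fun x => ?_⟩
  refine le_trans (measure_mono (ball_subset_ball ?_)) (hKle x)
  rw [div_lt_iff₀ hr] at hn
  linarith

private lemma dvloc_pos {X : Type*} [MetricSpace X] [MeasurableSpace X] [BorelSpace X]
    {μ : Measure X} (hDV : DVloc μ) (hμ : μ ≠ 0) {x : X} {r : ℝ} (hr : 0 < r) :
    0 < μ (ball x r) := by
  by_contra h
  push_neg at h
  have h0 : μ (ball x r) = 0 := le_antisymm h zero_le
  have key : ∀ n : ℕ, μ (ball x (2 ^ n * r)) = 0 := fun n => by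
    obtain ⟨K, hK, hKle⟩ := dvloc_pow hDV hr n
    exact le_antisymm ((hKle x).trans (by rw [h0, mul_zero])) zero_le
  have hu : (univ : Set X) ⊆ ⋃ n : ℕ, ball x (2 ^ n * r) := by
    intro y _
    obtain ⟨n, hn⟩ := pow_unbounded_of_one_lt (dist y x / r) (one_lt_two (α := ℝ))
    rw [div_lt_iff₀ hr] at hn
    exact mem_iUnion.2 ⟨n, by rw [mem_ball]; linarith⟩
  have hz : μ univ = 0 := le_antisymm (le_trans (measure_mono hu)
    (le_trans (measure_iUnion_le _) (by simp [key]))) zero_le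
  exact hμ (Measure.measure_univ_eq_zero.mp hz)

theorem measure_controlled_by_image_neighborhood
    {X X' : Type*} [MetricSpace X] [MetricSpace X']
    [MeasurableSpace X] [BorelSpace X] [MeasurableSpace X'] [BorelSpace X']
    (μ : Measure X) [SigmaFinite μ] (μ' : Measure X') [SigmaFinite μ']
    (hDV : DVloc μ) (hDV' : DVloc μ')
    (f : X → X') (C₁ C₂ : ℝ) (C₃ : ℝ≥0)
    (hf : LargeScaleEquiv μ μ' f C₁ C₂ C₃) :
    ∃ C : ℝ≥0, 1 ≤ C ∧ ∀ A : Set X,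
      μ A ≤ (C : ℝ≥0∞) * μ' (nbhd (f '' A) C₁) := by
  obtain ⟨hC₁, hC₂, hC₃, -, hquasi, hmeas⟩ := hf
  by_cases hμ : μ = 0
  · exact ⟨1, le_refl 1, fun A => by simp [hμ]⟩
  set r₀ : ℝ := min C₁ 1 with hr₀def
  have hr₀ : 0 < r₀ := lt_min hC₁ one_pos
  have hr₀1 : r₀ ≤ 1 := min_le_right _ _
  have hr₀C₁ : r₀ ≤ C₁ := min_le_left _ _
  have hC₂0 : (0 : ℝ) < C₂ := lt_of_lt_of_le one_pos hC₂
  set R : ℝ := C₂ * (C₂ + 2 * C₁ + 1) with hRdef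
  have hR2 : (2 : ℝ) ≤ R := by nlinarith
  have hRpos : (0 : ℝ) < R := by linarith
  obtain ⟨K₁, hK₁, hK₁le⟩ := dvloc_mono hDV one_pos (by linarith : (1 : ℝ) ≤ 2 * R)
  obtain ⟨K₂, hK₂, hK₂le⟩ := dvloc_mono hDV' hr₀ hr₀1
  refine ⟨max 1 (K₁ * C₃ * K₂), le_max_left _ _, fun A => ?_⟩
  -- maximal R-separated subset of A
  obtain ⟨S, ⟨hSA, hSsep⟩, hSmax⟩ := zorn_subset
    {S : Set X | S ⊆ A ∧ S.Pairwise fun x y => R ≤ dist x y}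
    (fun c hc hchain => ⟨⋃₀ c, ⟨sUnion_subset fun s hs => (hc hs).1,
      fun x hx y hy hxy => by
        obtain ⟨s, hsc, hxs⟩ := hx
        obtain ⟨t, htc, hyt⟩ := hy
        rcases hchain.total hsc htc with h | h
        · exact (hc htc).2 (h hxs) hyt hxy
        · exact (hc hsc).2 hxs (h hyt) hxy⟩,
      fun s hs => subset_sUnion_of_mem hs⟩)
  have hcover : ∀ a ∈ A, ∃ s ∈ S, dist a s < R := by
    intro a ha
    by_contra hcon
    push_neg at hcon
    have haS : a ∉ S := fun h => absurd (hcon a h) (by rw [dist_self]; exact not_le.2 hRpos)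
    have hins : insert a S ∈ {S : Set X | S ⊆ A ∧ S.Pairwise fun x y => R ≤ dist x y} :=
      ⟨insert_subset ha hSA,
        (haveI : Std.Symm (fun x y : X => R ≤ dist x y) := ⟨fun x y h => by rwa [dist_comm]⟩; pairwise_insert_of_symm).2
          ⟨hSsep, fun b hb _ => hcon b hb⟩⟩
    exact haS (hSmax hins (subset_insert a S) (mem_insert a S))
  have hfsep : ∀ s ∈ S, ∀ t ∈ S, s ≠ t → 2 * C₁ + 1 ≤ dist (f s) (f t) := by
    intro s hs t ht hst
    have h1 := (hquasi s t).1
    have hd : R ≤ dist s t := hSsep hs ht hst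
    have hmono : C₂⁻¹ * R ≤ C₂⁻¹ * dist s t := by
      apply mul_le_mul_of_nonneg_left hd (by positivity)
    have hinv : C₂⁻¹ * R = C₂ + 2 * C₁ + 1 := by
      rw [hRdef, ← mul_assoc, inv_mul_cancel₀ hC₂0.ne', one_mul]
    linarith
  have hdisj : S.PairwiseDisjoint fun s => ball (f s) r₀ := by
    intro s hs t ht hst
    apply ball_disjoint_ball
    have := hfsep s hs t ht hst
    linarith
  have hScnt : S.Countable := by
    have hdisj2 : Pairwise (Function.onFun Disjoint fun s : S => ball (s : X) (R / 2)) := by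
      intro s t hst
      apply ball_disjoint_ball
      have := hSsep s.2 t.2 (Subtype.coe_injective.ne hst)
      linarith
    have hcnt := Measure.countable_meas_pos_of_disjoint_iUnion (μ := μ)
      (As := fun s : S => ball (s : X) (R / 2)) (fun _ => measurableSet_ball) hdisj2
    have hall : {i : S | 0 < μ (ball (i : X) (R / 2))} = univ :=
      eq_univ_of_forall fun s => dvloc_pos hDV hμ (by linarith)
    rw [hall] at hcnt
    exact countable_coe_iff.mp (countable_univ_iff.mp hcnt)
  have hAcov : A ⊆ ⋃ s ∈ S, ball s (2 * R) := fun a ha => by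
    obtain ⟨s, hsS, hds⟩ := hcover a ha
    exact mem_biUnion hsS (by rw [mem_ball]; linarith)
  have hC₃0 : (C₃ : ℝ≥0∞) ≠ 0 := by
    exact_mod_cast (lt_of_lt_of_le one_pos hC₃).ne'
  have hterm : ∀ s ∈ S,
      μ (ball s (2 * R)) ≤ ((K₁ * C₃ * K₂ : ℝ≥0) : ℝ≥0∞) * μ' (ball (f s) r₀) := by
    intro s _
    have h1 : μ (ball s 1) ≤ (C₃ : ℝ≥0∞) * μ' (ball (f s) 1) := by
      calc μ (ball s 1) = (C₃ : ℝ≥0∞) * ((C₃ : ℝ≥0∞)⁻¹ * μ (ball s 1)) := by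
            rw [← mul_assoc, ENNReal.mul_inv_cancel hC₃0 coe_ne_top, one_mul]
        _ ≤ (C₃ : ℝ≥0∞) * μ' (ball (f s) 1) := by gcongr; exact (hmeas s).1
    calc μ (ball s (2 * R)) ≤ (K₁ : ℝ≥0∞) * μ (ball s 1) := hK₁le s
      _ ≤ (K₁ : ℝ≥0∞) * ((C₃ : ℝ≥0∞) * μ' (ball (f s) 1)) := by gcongr
      _ ≤ (K₁ : ℝ≥0∞) * ((C₃ : ℝ≥0∞) * ((K₂ : ℝ≥0∞) * μ' (ball (f s) r₀))) := by
            gcongr; exact hK₂le (f s)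
      _ = ((K₁ * C₃ * K₂ : ℝ≥0) : ℝ≥0∞) * μ' (ball (f s) r₀) := by push_cast; ring
  have hnbhd : (⋃ s ∈ S, ball (f s) r₀) ⊆ nbhd (f '' A) C₁ := by
    intro y hy
    obtain ⟨s, hsS, hys⟩ := mem_iUnion₂.1 hy
    show infDist y (f '' A) ≤ C₁
    exact le_trans (infDist_le_dist_of_mem ⟨s, hSA hsS, rfl⟩)
      (le_trans (mem_ball.1 hys).le hr₀C₁)
  calc μ A ≤ μ (⋃ s ∈ S, ball s (2 * R)) := measure_mono hAcov
    _ ≤ ∑' s : S, μ (ball (s : X) (2 * R)) := measure_biUnion_le μ hScnt _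
    _ ≤ ∑' s : S, ((K₁ * C₃ * K₂ : ℝ≥0) : ℝ≥0∞) * μ' (ball (f (s : X)) r₀) :=
        ENNReal.tsum_le_tsum fun s => hterm s s.2
    _ = ((K₁ * C₃ * K₂ : ℝ≥0) : ℝ≥0∞) * ∑' s : S, μ' (ball (f (s : X)) r₀) :=
        ENNReal.tsum_mul_left
    _ = ((K₁ * C₃ * K₂ : ℝ≥0) : ℝ≥0∞) * μ' (⋃ s ∈ S, ball (f s) r₀) := by
        rw [measure_biUnion hScnt hdisj fun s _ => measurableSet_ball]
    _ ≤ ((K₁ * C₃ * K₂ : ℝ≥0) : ℝ≥0∞) * μ' (nbhd (f '' A) C₁) :=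
        mul_le_mul_right (measure_mono hnbhd) _
    _ ≤ ((max 1 (K₁ * C₃ * K₂) : ℝ≥0) : ℝ≥0∞) * μ' (nbhd (f '' A) C₁) := by
        gcongr; exact_mod_cast le_max_right _ _
end
end

section
/- Let f : (X,d,μ) → (X',d',μ') be a large-scale equivalence between two metric measure spaces satisfying (DV)_loc. Then the volume growth is preserved: for every x ∈ X there exists a constant C ≥ 1 such that for all r ≥ 1, C⁻¹ μ'(B(f(x), C⁻¹ r)) ≤ μ(B(x,r)) ≤ C μ'(B(f(x), C r)). -/
open Metric MeasureTheory Set ENNReal NNReal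

noncomputable section

lemma DVloc.ball_le {X : Type*} [MetricSpace X] [MeasurableSpace X] {μ : Measure X}
    (h : DVloc μ) (a : ℝ) :
    ∃ D : ℝ≥0, 1 ≤ D ∧ ∀ y : X, μ (ball y a) ≤ (D : ℝ≥0∞) * μ (ball y 1) := by
  have pow : ∀ n : ℕ, ∃ D : ℝ≥0, 1 ≤ D ∧
      ∀ y : X, μ (ball y (2 ^ n)) ≤ (D : ℝ≥0∞) * μ (ball y 1) := by
    intro n
    induction n with
    | zero => exact ⟨1, le_refl _, fun y => by simp⟩
    | succ n ih =>
      obtain ⟨D, hD1, hD⟩ := ih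
      obtain ⟨E, hE0, hE⟩ := h (2 ^ n) (by positivity)
      refine ⟨max 1 (E * D), le_max_left _ _, fun y => ?_⟩
      have h1 : μ (ball y (2 ^ (n + 1))) = μ (ball y (2 * 2 ^ n)) := by ring_nf
      calc μ (ball y (2 ^ (n + 1))) = μ (ball y (2 * 2 ^ n)) := h1
        _ ≤ (E : ℝ≥0∞) * μ (ball y (2 ^ n)) := hE y
        _ ≤ (E : ℝ≥0∞) * ((D : ℝ≥0∞) * μ (ball y 1)) := by gcongr; exact hD y
        _ = ((E * D : ℝ≥0) : ℝ≥0∞) * μ (ball y 1) := by push_cast; ring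
        _ ≤ ((max 1 (E * D) : ℝ≥0) : ℝ≥0∞) * μ (ball y 1) := by
            gcongr; exact_mod_cast le_max_right _ _
  obtain ⟨n, hn⟩ := pow_unbounded_of_one_lt a (one_lt_two (α := ℝ))
  obtain ⟨D, hD1, hD⟩ := pow n
  exact ⟨D, hD1, fun y => (measure_mono (ball_subset_ball hn.le)).trans (hD y)⟩

/-- Existence of a maximal `s`-separated subset of `A`. -/
lemma exists_max_sep {X : Type*} [MetricSpace X] (s : ℝ) (hs : 0 < s) (A : Set X) :
    ∃ T : Set X, T ⊆ A ∧ (∀ z ∈ T, ∀ z' ∈ T, z ≠ z' → s ≤ dist z z') ∧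
      ∀ p ∈ A, ∃ z ∈ T, dist p z < s := by
  set 𝒮 : Set (Set X) :=
    {T | T ⊆ A ∧ ∀ z ∈ T, ∀ z' ∈ T, z ≠ z' → s ≤ dist z z'} with h𝒮
  have hub : ∀ c ⊆ 𝒮, IsChain (· ⊆ ·) c → ∃ ub ∈ 𝒮, ∀ t ∈ c, t ⊆ ub := by
    intro c hc hchain
    refine ⟨⋃₀ c, ⟨sUnion_subset fun t ht => (hc ht).1,
      fun z hz z' hz' hne => ?_⟩, fun t ht => subset_sUnion_of_mem ht⟩
    obtain ⟨t1, ht1, hz1⟩ := hz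
    obtain ⟨t2, ht2, hz2⟩ := hz'
    rcases hchain.total ht1 ht2 with hle | hle
    · exact (hc ht2).2 z (hle hz1) z' hz2 hne
    · exact (hc ht1).2 z hz1 z' (hle hz2) hne
  obtain ⟨T, hT⟩ := zorn_subset 𝒮 hub
  · refine ⟨T, hT.prop.1, hT.prop.2, fun p hp => ?_⟩
    by_contra hcon
    push_neg at hcon
    have hpT : p ∉ T := by
      intro hmem
      have := hcon p hmem
      simp at this
      exact absurd this (not_le.mpr hs)
    have hins : insert p T ∈ 𝒮 := by
      refine ⟨insert_subset hp hT.prop.1, ?_⟩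
      intro z hz z' hz' hne
      rcases hz with rfl | hz
      · rcases hz' with rfl | hz'
        · exact absurd rfl hne
        · exact hcon z' hz'
      · rcases hz' with rfl | hz'
        · rw [dist_comm]; exact hcon z hz
        · exact hT.prop.2 z hz z' hz' hne
    have := hT.2 hins (subset_insert p T)
    exact hpT (this (mem_insert p T))

lemma ennreal_le_of_inv_mul_le {c a b : ℝ≥0∞} (hc0 : c ≠ 0) (hc : c ≠ ∞)
    (h : c⁻¹ * a ≤ b) : a ≤ c * b := by
  calc a = c * (c⁻¹ * a) := by rw [← mul_assoc, ENNReal.mul_inv_cancel hc0 hc, one_mul]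
    _ ≤ c * b := by gcongr

lemma ennreal_inv_mul_le {a b c d : ℝ≥0∞} (hd0 : d ≠ 0) (hd : d ≠ ∞)
    (hcd : c ≤ d) (h : a ≤ c * b) : d⁻¹ * a ≤ b := by
  calc d⁻¹ * a ≤ d⁻¹ * (d * b) := by gcongr; exact h.trans (by gcongr)
    _ = b := by rw [← mul_assoc, ENNReal.inv_mul_cancel hd0 hd, one_mul]

set_option maxHeartbeats 1000000 in
theorem volume_growth_invariant_under_large_scale_equiv
    {X X' : Type*} [MetricSpace X] [MetricSpace X']
    [MeasurableSpace X] [BorelSpace X] [MeasurableSpace X'] [BorelSpace X']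
    (μ : Measure X) [SigmaFinite μ] (μ' : Measure X') [SigmaFinite μ']
    (hDV : DVloc μ) (hDV' : DVloc μ')
    (f : X → X') (C₁ C₂ : ℝ) (C₃ : ℝ≥0)
    (hf : LargeScaleEquiv μ μ' f C₁ C₂ C₃) (x : X) :
    ∃ C : ℝ, 1 ≤ C ∧ ∀ r : ℝ, 1 ≤ r →
      (ENNReal.ofReal C)⁻¹ * μ' (Metric.ball (f x) (C⁻¹ * r)) ≤ μ (Metric.ball x r) ∧
      μ (Metric.ball x r) ≤ ENNReal.ofReal C * μ' (Metric.ball (f x) (C * r)) := by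
  obtain ⟨hC₁, hC₂, hC₃, hdense, hlip, hmeas⟩ := hf
  have hC₂0 : (0 : ℝ) < C₂ := lt_of_lt_of_le one_pos hC₂
  have hC₃R : (1 : ℝ) ≤ (C₃ : ℝ) := by exact_mod_cast hC₃
  have hC₃0 : (C₃ : ℝ≥0∞) ≠ 0 := by
    exact_mod_cast (zero_lt_one.trans_le hC₃).ne'
  have hC₃top : (C₃ : ℝ≥0∞) ≠ ∞ := ENNReal.coe_ne_top
  choose g hg using hdense
  set s : ℝ := C₂ * (C₂ + 2) with hs_def
  have hs2 : 2 ≤ s := by nlinarith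
  have hs0 : 0 < s := by nlinarith
  set s' : ℝ := 2 * C₁ + 3 * C₂ with hs'_def
  have hs'2 : 2 ≤ s' := by nlinarith
  have hs'0 : 0 < s' := by nlinarith
  obtain ⟨D, hD1, hD⟩ := hDV.ball_le s
  obtain ⟨D', hD'1, hD'⟩ := hDV'.ball_le s'
  obtain ⟨E', hE'1, hE'⟩ := hDV'.ball_le (1 + C₁)
  set Q : ℝ := C₂ * (C₁ + C₂) + 1 with hQ_def
  have hQ1 : 1 ≤ Q := by nlinarith
  have hDR : (0 : ℝ) ≤ ((D * C₃ : ℝ≥0) : ℝ) := (D * C₃).coe_nonneg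
  have hD'R : (0 : ℝ) ≤ ((D' * E' * C₃ : ℝ≥0) : ℝ) := (D' * E' * C₃).coe_nonneg
  set C : ℝ := (C₃ : ℝ) + 2 * Q + 2 * C₂ + ((D * C₃ : ℝ≥0) : ℝ)
      + ((D' * E' * C₃ : ℝ≥0) : ℝ) + (2 * C₂ + 1) with hC_def
  have hC1 : 1 ≤ C := by nlinarith
  have hC0 : (0 : ℝ) < C := lt_of_lt_of_le one_pos hC1
  have hCC₃ : (C₃ : ℝ) ≤ C := by nlinarith
  have hCQ : 2 * Q ≤ C := by nlinarith
  have hCC₂ : 2 * C₂ ≤ C := by nlinarith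
  have hCM : ((D * C₃ : ℝ≥0) : ℝ) ≤ C := by nlinarith
  have hCM' : ((D' * E' * C₃ : ℝ≥0) : ℝ) ≤ C := by nlinarith
  have hCK : 2 * C₂ + 1 ≤ C := by nlinarith
  have hCne : ENNReal.ofReal C ≠ 0 := (ENNReal.ofReal_pos.mpr hC0).ne'
  have hCtop : ENNReal.ofReal C ≠ ∞ := ENNReal.ofReal_ne_top
  have hMle : ((D * C₃ : ℝ≥0) : ℝ≥0∞) ≤ ENNReal.ofReal C := by
    rw [← ENNReal.ofReal_coe_nnreal]; exact ENNReal.ofReal_le_ofReal hCM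
  have hM'le : ((D' * E' * C₃ : ℝ≥0) : ℝ≥0∞) ≤ ENNReal.ofReal C := by
    rw [← ENNReal.ofReal_coe_nnreal]; exact ENNReal.ofReal_le_ofReal hCM'
  have hC₃le : (C₃ : ℝ≥0∞) ≤ ENNReal.ofReal C := by
    rw [← ENNReal.ofReal_coe_nnreal]; exact ENNReal.ofReal_le_ofReal hCC₃
  refine ⟨C, hC1, fun r hr => ⟨?_, ?_⟩⟩
  -- LOWER BOUND
  · have hr0 : (0 : ℝ) < r := lt_of_lt_of_le one_pos hr
    rcases le_total r C with hrC | hrC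
    · -- easy case: C⁻¹ * r ≤ 1
      have h1 : C⁻¹ * r ≤ 1 := by
        rw [← inv_mul_cancel₀ hC0.ne']
        exact mul_le_mul_of_nonneg_left hrC (inv_nonneg.mpr hC0.le)
      have hchain : μ' (ball (f x) (C⁻¹ * r)) ≤ (C₃ : ℝ≥0∞) * μ (ball x r) :=
        calc μ' (ball (f x) (C⁻¹ * r)) ≤ μ' (ball (f x) 1) :=
              measure_mono (ball_subset_ball h1)
          _ ≤ (C₃ : ℝ≥0∞) * μ (ball x 1) := (hmeas x).2
          _ ≤ (C₃ : ℝ≥0∞) * μ (ball x r) :=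
              mul_le_mul_right (measure_mono (ball_subset_ball hr)) _
      exact ennreal_inv_mul_le hCne hCtop hC₃le hchain
    · -- covering case: C ≤ r
      have ht1 : 1 ≤ C⁻¹ * r := by
        rw [← inv_mul_cancel₀ hC0.ne']
        exact mul_le_mul_of_nonneg_left hrC (inv_nonneg.mpr hC0.le)
      set t : ℝ := C⁻¹ * r with ht_def
      have hCt : C * t = r := by
        rw [ht_def, ← mul_assoc, mul_inv_cancel₀ hC0.ne', one_mul]
      by_cases h0 : μ' (ball (f x) t) = 0
      · rw [h0, mul_zero]; exact zero_le
      have hpos' : ∀ y ∈ ball (f x) t, 0 < μ' (ball y 1) := by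
        intro y hy
        by_contra hle
        push_neg at hle
        have hzero : μ' (ball y 1) = 0 := le_antisymm (by simpa using hle) zero_le
        obtain ⟨G, _, hG⟩ := hDV'.ball_le (2 * t)
        have hsub : ball (f x) t ⊆ ball y (2 * t) := by
          intro w hw
          rw [mem_ball] at *
          have h3 := dist_triangle w (f x) y
          have h4 : dist (f x) y = dist y (f x) := dist_comm _ _
          linarith
        exact h0 (le_antisymm (((measure_mono hsub).trans (hG y)).trans
          (by rw [hzero, mul_zero])) zero_le)
      obtain ⟨T, hTsub, hTsep, hTcov⟩ := exists_max_sep s' hs'0 (ball (f x) t)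
      have hTdisj1 : T.PairwiseDisjoint (fun y => ball y 1) := by
        intro y hy y' hy' hne
        exact ball_disjoint_ball (by have := hTsep y hy y' hy' hne; linarith)
      have hTc : T.Countable := by
        have key := MeasureTheory.Measure.countable_meas_pos_of_disjoint_iUnion
          (μ := μ') (As := fun y : T => ball (y : X') 1)
          (fun _ => measurableSet_ball)
          (fun y y' hne => hTdisj1 y.2 y'.2 (fun h => hne (Subtype.ext h)))
        have huniv : {i : T | 0 < μ' (ball (i : X') 1)} = univ :=
          eq_univ_of_forall fun i => hpos' i (hTsub i.2)
        rw [huniv, countable_univ_iff] at key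
        exact Set.countable_coe_iff.mp key
      -- pullbacks are 2-separated
      have hgsep : ∀ y ∈ T, ∀ y' ∈ T, y ≠ y' → 2 ≤ dist (g y) (g y') := by
        intro y hy y' hy' hne
        have h1 := (hlip (g y) (g y')).2
        have h2 := hTsep y hy y' hy' hne
        have h3 := dist_triangle4 y (f (g y)) (f (g y')) y'
        have h4 := hg y
        have h5 := hg y'
        have h6 : dist (f (g y')) y' = dist y' (f (g y')) := dist_comm _ _
        nlinarith
      have hgdisj : T.PairwiseDisjoint (fun y => ball (g y) 1) := by
        intro y hy y' hy' hne
        exact ball_disjoint_ball (by have := hgsep y hy y' hy' hne; linarith)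
      have hballsub : ∀ y ∈ T, ball (g y) 1 ⊆ ball x r := by
        intro y hy w hw
        rw [mem_ball] at hw ⊢
        have h1 := (hlip x (g y)).1
        have h2 : dist (f x) (f (g y)) ≤ dist (f x) y + dist y (f (g y)) :=
          dist_triangle _ _ _
        have h3 : dist (f x) y < t := mem_ball'.mp (hTsub hy)
        have h4 := hg y
        have h5 : dist x (g y) ≤ C₂ * (dist (f x) (f (g y)) + C₂) := by
          have h := (hlip x (g y)).1
          have h' := mul_le_mul_of_nonneg_left h hC₂0.le
          rw [mul_sub, ← mul_assoc, mul_inv_cancel₀ hC₂0.ne', one_mul] at h'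
          linarith
        have h8 : dist x (g y) < C₂ * t + Q - 1 := by nlinarith
        have h9 := dist_triangle w (g y) x
        have h10 : dist (g y) x = dist x (g y) := dist_comm _ _
        -- C₂ * t + Q ≤ C * t = r
        have h11 : C₂ * t + Q ≤ C * t := by nlinarith
        linarith [hCt ▸ h11]
      -- the covering chain
      have hcov : ball (f x) t ⊆ ⋃ y ∈ T, ball (y : X') s' := by
        intro p hp
        obtain ⟨y, hy, hpy⟩ := hTcov p hp
        exact mem_iUnion₂.mpr ⟨y, hy, mem_ball.mpr hpy⟩
      have hchain : μ' (ball (f x) t) ≤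
          ((D' * E' * C₃ : ℝ≥0) : ℝ≥0∞) * μ (ball x r) := by
        calc μ' (ball (f x) t) ≤ μ' (⋃ y ∈ T, ball (y : X') s') := measure_mono hcov
          _ ≤ ∑' y : T, μ' (ball (y : X') s') := measure_biUnion_le μ' hTc _
          _ ≤ ∑' y : T, ((D' * E' * C₃ : ℝ≥0) : ℝ≥0∞) * μ (ball (g y) 1) := by
              refine ENNReal.tsum_le_tsum fun y => ?_
              calc μ' (ball (y : X') s') ≤ (D' : ℝ≥0∞) * μ' (ball (y : X') 1) := hD' _
                _ ≤ (D' : ℝ≥0∞) * μ' (ball (f (g y)) (1 + C₁)) := by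
                    refine mul_le_mul_right (measure_mono (Metric.ball_subset ?_)) _
                    have := hg (y : X')
                    linarith
                _ ≤ (D' : ℝ≥0∞) * ((E' : ℝ≥0∞) * μ' (ball (f (g y)) 1)) := by
                    gcongr; exact hE' _
                _ ≤ (D' : ℝ≥0∞) * ((E' : ℝ≥0∞) * ((C₃ : ℝ≥0∞) * μ (ball (g y) 1))) := by
                    gcongr; exact (hmeas (g y)).2
                _ = ((D' * E' * C₃ : ℝ≥0) : ℝ≥0∞) * μ (ball (g (y : X')) 1) := by
                    push_cast; ring
          _ = ((D' * E' * C₃ : ℝ≥0) : ℝ≥0∞) * ∑' y : T, μ (ball (g (y : X')) 1) :=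
              ENNReal.tsum_mul_left
          _ = ((D' * E' * C₃ : ℝ≥0) : ℝ≥0∞) * μ (⋃ y ∈ T, ball (g y) 1) := by
              rw [measure_biUnion hTc hgdisj (fun _ _ => measurableSet_ball)]
          _ ≤ ((D' * E' * C₃ : ℝ≥0) : ℝ≥0∞) * μ (ball x r) := by
              gcongr
              exact iUnion₂_subset hballsub
      exact ennreal_inv_mul_le hCne hCtop hM'le hchain
  -- UPPER BOUND
  · by_cases hz : μ (ball x r) = 0
    · rw [hz]; exact zero_le
    have hr0 : (0 : ℝ) < r := lt_of_lt_of_le one_pos hr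
    have hpos : ∀ z ∈ ball x r, 0 < μ (ball z 1) := by
      intro z hz'
      by_contra hle
      push_neg at hle
      have hzero : μ (ball z 1) = 0 := le_antisymm (by simpa using hle) zero_le
      obtain ⟨G, _, hG⟩ := hDV.ball_le (2 * r)
      have hsub : ball x r ⊆ ball z (2 * r) := by
        intro w hw
        rw [mem_ball] at *
        have h3 := dist_triangle w x z
        have h4 : dist x z = dist z x := dist_comm _ _
        linarith
      exact hz (le_antisymm (((measure_mono hsub).trans (hG z)).trans
        (by rw [hzero, mul_zero])) zero_le)
    obtain ⟨T, hTsub, hTsep, hTcov⟩ := exists_max_sep s hs0 (ball x r)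
    have hTdisj1 : T.PairwiseDisjoint (fun z => ball z 1) := by
      intro z hz1 z' hz1' hne
      exact ball_disjoint_ball (by have := hTsep z hz1 z' hz1' hne; linarith)
    have hTc : T.Countable := by
      have key := MeasureTheory.Measure.countable_meas_pos_of_disjoint_iUnion
        (μ := μ) (As := fun z : T => ball (z : X) 1)
        (fun _ => measurableSet_ball)
        (fun z z' hne => hTdisj1 z.2 z'.2 (fun h => hne (Subtype.ext h)))
      have huniv : {i : T | 0 < μ (ball (i : X) 1)} = univ :=
        eq_univ_of_forall fun i => hpos i (hTsub i.2)
      rw [huniv, countable_univ_iff] at key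
      exact Set.countable_coe_iff.mp key
    have hfsep : ∀ z ∈ T, ∀ z' ∈ T, z ≠ z' → 2 ≤ dist (f z) (f z') := by
      intro z hz1 z' hz1' hne
      have h1 := (hlip z z').1
      have h2 := hTsep z hz1 z' hz1' hne
      have hinv : C₂⁻¹ * s = C₂ + 2 := by
        rw [hs_def, ← mul_assoc, inv_mul_cancel₀ hC₂0.ne', one_mul]
      have h3 : C₂⁻¹ * s ≤ C₂⁻¹ * dist z z' :=
        mul_le_mul_of_nonneg_left h2 (inv_nonneg.mpr hC₂0.le)
      linarith
    have hTdisjf : T.PairwiseDisjoint (fun z => ball (f z) 1) := by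
      intro z hz1 z' hz1' hne
      exact ball_disjoint_ball (by have := hfsep z hz1 z' hz1' hne; linarith)
    have hcov : ball x r ⊆ ⋃ z ∈ T, ball (z : X) s := by
      intro p hp
      obtain ⟨z, hz', hpz⟩ := hTcov p hp
      exact mem_iUnion₂.mpr ⟨z, hz', mem_ball.mpr hpz⟩
    have hballsub : ∀ z ∈ T, ball (f z) 1 ⊆ ball (f x) (C * r) := by
      intro z hz' w hw
      rw [mem_ball] at hw ⊢
      have h1 := (hlip z x).2
      have h2 : dist z x < r := mem_ball.mp (hTsub hz')
      have h3 := dist_triangle w (f z) (f x)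
      have h4 : C₂ * r + C₂ + 1 ≤ C * r := by nlinarith
      nlinarith [dist_nonneg (x := z) (y := x)]
    have hchain : μ (ball x r) ≤
        ((D * C₃ : ℝ≥0) : ℝ≥0∞) * μ' (ball (f x) (C * r)) := by
      calc μ (ball x r) ≤ μ (⋃ z ∈ T, ball (z : X) s) := measure_mono hcov
        _ ≤ ∑' z : T, μ (ball (z : X) s) := measure_biUnion_le μ hTc _
        _ ≤ ∑' z : T, ((D * C₃ : ℝ≥0) : ℝ≥0∞) * μ' (ball (f (z : X)) 1) := by
            refine ENNReal.tsum_le_tsum fun z => ?_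
            calc μ (ball (z : X) s) ≤ (D : ℝ≥0∞) * μ (ball (z : X) 1) := hD _
              _ ≤ (D : ℝ≥0∞) * ((C₃ : ℝ≥0∞) * μ' (ball (f (z : X)) 1)) := by
                  gcongr
                  exact ennreal_le_of_inv_mul_le hC₃0 hC₃top (hmeas (z : X)).1
              _ = ((D * C₃ : ℝ≥0) : ℝ≥0∞) * μ' (ball (f (z : X)) 1) := by
                  push_cast; ring
        _ = ((D * C₃ : ℝ≥0) : ℝ≥0∞) * ∑' z : T, μ' (ball (f (z : X)) 1) :=
            ENNReal.tsum_mul_left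
        _ = ((D * C₃ : ℝ≥0) : ℝ≥0∞) * μ' (⋃ z ∈ T, ball (f z) 1) := by
            rw [measure_biUnion hTc hTdisjf (fun _ _ => measurableSet_ball)]
        _ ≤ ((D * C₃ : ℝ≥0) : ℝ≥0∞) * μ' (ball (f x) (C * r)) := by
            gcongr
            exact iUnion₂_subset hballsub
    calc μ (ball x r) ≤ ((D * C₃ : ℝ≥0) : ℝ≥0∞) * μ' (ball (f x) (C * r)) := hchain
      _ ≤ ENNReal.ofReal C * μ' (ball (f x) (C * r)) := by gcongr
end
end

section
/- Let (X,d,μ) be a metric measure space with property (M) with constant C ≥ 1, let h ≥ C, and let x ∈ X. Suppose the balls centered at x are strongly asymptotically isoperimetric in the following sense: there exists C' ≥ 1 such that μ(∂_h B(x,s)) ≤ C' μ(∂_h B(x,r)) whenever 0 < s ≤ r. Then there exists c > 0 such that for every r ≥ 1, μ(∂_h B(x,r)) ≥ c μ(B(x,r))/r. -/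
open Metric MeasureTheory Set ENNReal NNReal

noncomputable section

/-- Property (M) with constant `C`: every point of `B(x, r+1)` is within distance `C`
of `B(x, r)`. -/
def PropertyM (X : Type*) [MetricSpace X] (C : ℝ) : Prop :=
  ∀ (x : X) (r : ℝ), 0 < r → ∀ y ∈ Metric.ball x (r + 1),
    Metric.infDist y (Metric.ball x r) ≤ C

theorem strongly_isoperimetric_balls_implies_strong_inequality
    {X : Type*} [MetricSpace X] [MeasurableSpace X] [BorelSpace X]
    (μ : Measure X) [SigmaFinite μ]
    (C : ℝ) (hC : 1 ≤ C) (hM : PropertyM X C) (h : ℝ) (hh : C ≤ h) (x : X)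
    (C' : ℝ≥0) (hC' : 1 ≤ C')
    (hiso : ∀ s r : ℝ, 0 < s → s ≤ r →
      μ (hBdry (Metric.ball x s) h) ≤ (C' : ℝ≥0∞) * μ (hBdry (Metric.ball x r) h)) :
    ∃ c : ℝ≥0, 0 < c ∧ ∀ r : ℝ, 1 ≤ r →
      (c : ℝ≥0∞) * (μ (Metric.ball x r) / ENNReal.ofReal r) ≤
        μ (hBdry (Metric.ball x r) h) := by
  have h1 : (1:ℝ) ≤ h := le_trans hC hh
  have h0 : (0:ℝ) < h := lt_of_lt_of_le zero_lt_one h1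
  have memBdry : ∀ (A : Set X) (y : X), Metric.infDist y A ≤ h →
      Metric.infDist y Aᶜ ≤ h → y ∈ hBdry A h := fun A y a b => ⟨a, b⟩
  -- L2 : annuli are in the h-boundary
  have L2 : ∀ s : ℝ, 0 < s → ∀ y ∈ ball x (s+1) \ ball x s, y ∈ hBdry (ball x s) h := by
    intro s hs y hy
    refine memBdry _ _ (le_trans (hM x s hs y hy.1) hh) ?_
    exact le_trans (le_of_eq (Metric.infDist_zero_of_mem hy.2)) h0.le
  -- L1 : punctured-core approximants
  have L1 : ∀ s : ℝ, 0 < s → ∀ y ∈ ball x 1 \ ball x s, y ∈ hBdry (ball x s) h := by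
    intro s hs y hy
    refine memBdry _ _ ?_ (le_trans (le_of_eq (Metric.infDist_zero_of_mem hy.2)) h0.le)
    exact le_trans (le_trans (Metric.infDist_le_dist_of_mem (mem_ball_self hs))
      (le_of_lt (mem_ball.mp hy.1))) h1
  -- L3 : the point x lies in some small h-boundary
  have L3 : ∀ r : ℝ, 1 ≤ r → ∃ s : ℝ, 0 < s ∧ s ≤ r ∧ x ∈ hBdry (ball x s) h := by
    intro r hr
    have hr0 : (0:ℝ) < r := lt_of_lt_of_le zero_lt_one hr
    by_cases hcase : ∃ y : X, y ≠ x ∧ dist x y ≤ h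
    · obtain ⟨y, hyx, hyh⟩ := hcase
      have hd : 0 < dist x y := dist_pos.mpr (Ne.symm hyx)
      have hmin : 0 < min (dist x y) r := lt_min hd hr0
      refine ⟨min (dist x y) r, hmin, min_le_right _ _, memBdry _ _ ?_ ?_⟩
      · exact le_trans (le_of_eq (Metric.infDist_zero_of_mem (mem_ball_self hmin))) h0.le
      · have hy : y ∈ (ball x (min (dist x y) r))ᶜ := by
          simp only [mem_compl_iff, mem_ball, not_lt]
          calc min (dist x y) r ≤ dist x y := min_le_left _ _
            _ = dist y x := dist_comm x y
        exact le_trans (Metric.infDist_le_dist_of_mem hy) hyh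
    · push_neg at hcase
      by_cases hz : ∃ z : X, z ≠ x
      · obtain ⟨z, hzx⟩ := hz
        have hzfar : h < dist x z := hcase z hzx
        have hR1 : 1 < dist x z := lt_of_le_of_lt h1 hzfar
        have hrpos : 0 < dist x z - 2⁻¹ := by linarith
        have hxmem : x ∈ ball z (dist x z - 2⁻¹ + 1) := by
          rw [mem_ball, dist_comm]
          linarith
        have hMi := hM z (dist x z - 2⁻¹) hrpos x hxmem
        have hsub : ball z (dist x z - 2⁻¹) ⊆ (ball x 1)ᶜ := by
          intro v hv
          simp only [mem_compl_iff, mem_ball, not_lt]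
          rcases eq_or_ne v x with hvx | hvx
          · exfalso
            rw [hvx, mem_ball, dist_comm] at hv
            linarith
          · have hfar := hcase v hvx
            rw [dist_comm]
            linarith
        have hne : (ball z (dist x z - 2⁻¹)).Nonempty := ⟨z, mem_ball_self hrpos⟩
        refine ⟨1, one_pos, hr, memBdry _ _ ?_ ?_⟩
        · exact le_trans (le_of_eq (Metric.infDist_zero_of_mem (mem_ball_self one_pos))) h0.le
        · exact le_trans (le_trans (Metric.infDist_le_infDist_of_subset hsub hne) hMi) hh
      · push_neg at hz
        refine ⟨r, hr0, le_refl r, memBdry _ _ ?_ ?_⟩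
        · exact le_trans (le_of_eq (Metric.infDist_zero_of_mem (mem_ball_self hr0))) h0.le
        · have hemp : (ball x r)ᶜ = (∅ : Set X) := by
            ext v
            simp [hz v, mem_ball, hr0]
          rw [hemp, Metric.infDist_empty]
          exact h0.le
  have hC'0 : (4 * C' : ℝ≥0) ≠ 0 := by
    intro hcontra
    have : (1:ℝ≥0) ≤ C' := hC'
    simp [mul_eq_zero] at hcontra
    rw [hcontra] at this
    exact absurd this (by norm_num)
  refine ⟨(4 * C')⁻¹, ?_, ?_⟩
  · exact inv_pos.mpr (pos_iff_ne_zero.mpr hC'0)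
  · intro r hr
    have hr0 : (0:ℝ) < r := lt_of_lt_of_le zero_lt_one hr
    set D := μ (hBdry (ball x r) h) with hD
    set n := ⌈r⌉₊ with hn
    have hrn : r ≤ (n:ℝ) := Nat.le_ceil r
    have hnr1 : (n:ℝ) < r + 1 := Nat.ceil_lt_add_one hr0.le
    -- (a) the point
    have ha : μ {x} ≤ (C':ℝ≥0∞) * D := by
      obtain ⟨s, hs0, hsr, hxs⟩ := L3 r hr
      exact le_trans (measure_mono (singleton_subset_iff.mpr hxs)) (hiso s r hs0 hsr)
    -- (b) the punctured core
    have hb : μ (ball x 1 \ {x}) ≤ (C':ℝ≥0∞) * D := by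
      set S : ℕ → Set X := fun m => ball x 1 \ ball x (((m:ℝ)+1)⁻¹) with hS
      have hcover : ball x 1 \ {x} = ⋃ m : ℕ, S m := by
        ext y
        simp only [hS, mem_diff, mem_singleton_iff, mem_iUnion, mem_ball]
        constructor
        · rintro ⟨hy1, hy2⟩
          have hd : 0 < dist y x := dist_pos.mpr hy2
          obtain ⟨m, hm⟩ := exists_nat_one_div_lt hd
          refine ⟨m, hy1, ?_⟩
          rw [one_div] at hm
          linarith
        · rintro ⟨m, hy1, hy2⟩
          refine ⟨hy1, ?_⟩
          intro hyx
          apply hy2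
          rw [hyx, dist_self]
          positivity
      have hmono : Monotone S := by
        intro a b hab
        apply diff_subset_diff_right
        apply ball_subset_ball
        have : (a:ℝ) + 1 ≤ (b:ℝ) + 1 := by exact_mod_cast by omega
        gcongr
      rw [hcover, hmono.directed_le.measure_iUnion]
      refine iSup_le fun m => ?_
      have hinv : (0:ℝ) < ((m:ℝ)+1)⁻¹ := by positivity
      have hsub : S m ⊆ hBdry (ball x (((m:ℝ)+1)⁻¹)) h := fun y hy => L1 _ hinv y hy
      have hle1 : ((m:ℝ)+1)⁻¹ ≤ r := by
        have : ((m:ℝ)+1)⁻¹ ≤ 1 := by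
          rw [inv_le_one_iff₀]
          right; linarith [Nat.cast_nonneg (α := ℝ) m]
        linarith
      exact le_trans (measure_mono hsub) (hiso _ r hinv hle1)
    -- (c) the annuli
    have hc : μ (ball x (n:ℝ) \ ball x 1) ≤ (n:ℝ≥0∞) * ((C':ℝ≥0∞) * D) := by
      have hcov : ball x (n:ℝ) \ ball x 1 ⊆
          ⋃ k ∈ Finset.Ico 1 n, (ball x ((k:ℝ)+1) \ ball x (k:ℝ)) := by
        intro y hy
        obtain ⟨hy1, hy2⟩ := hy
        have hd1 : (1:ℝ) ≤ dist y x := by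
          simpa [mem_ball, not_lt] using hy2
        have hdn : dist y x < (n:ℝ) := mem_ball.mp hy1
        have hk1 : 1 ≤ ⌊dist y x⌋₊ := by
          exact_mod_cast Nat.le_floor (by exact_mod_cast hd1)
        have hkn : ⌊dist y x⌋₊ < n := by
          have hle : (⌊dist y x⌋₊ : ℝ) ≤ dist y x := Nat.floor_le dist_nonneg
          exact_mod_cast lt_of_le_of_lt hle hdn
        refine mem_biUnion (Finset.mem_Ico.mpr ⟨hk1, hkn⟩) ⟨?_, ?_⟩
        · rw [mem_ball]
          exact Nat.lt_floor_add_one _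
        · simp only [mem_ball, not_lt]
          exact Nat.floor_le dist_nonneg
      refine le_trans (measure_mono hcov) (le_trans (measure_biUnion_finset_le _ _) ?_)
      have hbound : ∀ k ∈ Finset.Ico 1 n, μ (ball x ((k:ℝ)+1) \ ball x (k:ℝ)) ≤ (C':ℝ≥0∞) * D := by
        intro k hk
        obtain ⟨hk1, hkn⟩ := Finset.mem_Ico.mp hk
        have hkpos : (0:ℝ) < (k:ℝ) := by exact_mod_cast hk1
        have hkr : (k:ℝ) ≤ r := by
          have : (k:ℝ) + 1 ≤ (n:ℝ) := by exact_mod_cast hkn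
          linarith
        exact le_trans (measure_mono (fun y hy => L2 (k:ℝ) hkpos y hy)) (hiso _ r hkpos hkr)
      calc ∑ k ∈ Finset.Ico 1 n, μ (ball x ((k:ℝ)+1) \ ball x (k:ℝ))
          ≤ ∑ _k ∈ Finset.Ico 1 n, (C':ℝ≥0∞) * D := Finset.sum_le_sum hbound
        _ = ((Finset.Ico 1 n).card : ℝ≥0∞) * ((C':ℝ≥0∞) * D) := by
            rw [Finset.sum_const, nsmul_eq_mul]
        _ ≤ (n:ℝ≥0∞) * ((C':ℝ≥0∞) * D) := by
            gcongr
            rw [Nat.card_Ico]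
            exact_mod_cast Nat.cast_le.mpr (Nat.sub_le n 1)
    -- total
    have hsubset : ball x r ⊆ ({x} ∪ (ball x 1 \ {x})) ∪ (ball x (n:ℝ) \ ball x 1) := by
      intro y hy
      rw [mem_ball] at hy
      by_cases hy1 : dist y x < 1
      · left
        rcases eq_or_ne y x with hyx | hyx
        · exact Or.inl (by simp [hyx])
        · exact Or.inr ⟨mem_ball.mpr hy1, hyx⟩
      · right
        exact ⟨mem_ball.mpr (lt_of_lt_of_le hy hrn), fun hmem => hy1 (mem_ball.mp hmem)⟩
    have htot : μ (ball x r) ≤ ((n:ℝ≥0∞) + 2) * ((C':ℝ≥0∞) * D) := by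
      calc μ (ball x r) ≤ μ (({x} ∪ (ball x 1 \ {x})) ∪ (ball x (n:ℝ) \ ball x 1)) :=
            measure_mono hsubset
        _ ≤ μ ({x} ∪ (ball x 1 \ {x})) + μ (ball x (n:ℝ) \ ball x 1) := measure_union_le _ _
        _ ≤ (μ {x} + μ (ball x 1 \ {x})) + μ (ball x (n:ℝ) \ ball x 1) := by
            gcongr
            exact measure_union_le _ _
        _ ≤ ((C':ℝ≥0∞) * D + (C':ℝ≥0∞) * D) + (n:ℝ≥0∞) * ((C':ℝ≥0∞) * D) := by
            gcongr
        _ = ((n:ℝ≥0∞) + 2) * ((C':ℝ≥0∞) * D) := by ring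
    have hnr : ((n:ℝ≥0∞) + 2) ≤ ENNReal.ofReal (4*r) := by
      have hle : (n:ℝ) + 2 ≤ 4 * r := by linarith
      calc ((n:ℝ≥0∞) + 2) = ENNReal.ofReal ((n:ℝ) + 2) := by
            rw [ENNReal.ofReal_add (by positivity) (by norm_num), ENNReal.ofReal_natCast]
            norm_num
        _ ≤ ENNReal.ofReal (4*r) := ENNReal.ofReal_le_ofReal hle
    have hmain : μ (ball x r) ≤ (4 * (C':ℝ≥0∞) * D) * ENNReal.ofReal r := by
      calc μ (ball x r) ≤ ((n:ℝ≥0∞) + 2) * ((C':ℝ≥0∞) * D) := htot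
        _ ≤ ENNReal.ofReal (4*r) * ((C':ℝ≥0∞) * D) := mul_le_mul_left hnr _
        _ = (4 * (C':ℝ≥0∞) * D) * ENNReal.ofReal r := by
            rw [ENNReal.ofReal_mul (by norm_num : (0:ℝ) ≤ 4)]
            norm_num
            ring
    have hofr0 : ENNReal.ofReal r ≠ 0 := (ENNReal.ofReal_pos.mpr hr0).ne'
    have hdiv : μ (ball x r) / ENNReal.ofReal r ≤ 4 * (C':ℝ≥0∞) * D :=
      (ENNReal.div_le_iff_le_mul (Or.inl hofr0) (Or.inl ENNReal.ofReal_ne_top)).mpr hmain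
    calc ((((4 * C')⁻¹ : ℝ≥0)) : ℝ≥0∞) * (μ (ball x r) / ENNReal.ofReal r)
        ≤ (((4 * C')⁻¹ : ℝ≥0) : ℝ≥0∞) * (4 * (C':ℝ≥0∞) * D) := mul_le_mul_right hdiv _
      _ = D := by
          rw [ENNReal.coe_inv hC'0]
          have hcast : ((4 * C' : ℝ≥0) : ℝ≥0∞) = 4 * (C':ℝ≥0∞) := by push_cast; ring
          have hC'ne : (C':ℝ≥0∞) ≠ 0 := by
            exact_mod_cast (lt_of_lt_of_le zero_lt_one hC').ne'
          have h4ne : (4 * (C':ℝ≥0∞)) ≠ 0 := mul_ne_zero (by norm_num) hC'ne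
          have h4top : (4 * (C':ℝ≥0∞)) ≠ ⊤ := ENNReal.mul_ne_top (by norm_num) ENNReal.coe_ne_top
          have hcast : ((4 * C' : ℝ≥0) : ℝ≥0∞) = 4 * (C':ℝ≥0∞) := by push_cast; ring
          rw [hcast, ← mul_assoc, ENNReal.inv_mul_cancel h4ne h4top, one_mul]
end
end
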